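/- arXiv:0807.1190 — 6 statements merged into one kernel-verified Lean document; each statement's English description precedes it below -/
import Mathlib

section
/- Let A be a finite alphabet and let c, p be positive integers with p ≤ c. The number of distinct words w of length c over A that admit two factorizations w = x₁vy₁ = x₂vy₂ with |v| ≥ p and x₁ ≠ x₂ is at most c² · |A|^{c-p}. -/
/-- If `w = x ++ v ++ y`, then for `k < |v|`, `w[|x|+k]? = v[k]?`. -/
lemma factor_getElem {A : Type*} {w x v y : List A} (h : w = x ++ v ++ y)
    {k : ℕ} (hk : k < v.length) : w[x.length + k]? = v[k]? := by
  subst h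
  rw [List.append_assoc, List.getElem?_append_right (Nat.le_add_right _ _),
    Nat.add_sub_cancel_left, List.getElem?_append_left hk]

/-- Key extraction: from a word admitting two factorisations with distinct prefixes,
extract positions `i < j` with `j + p ≤ |w|` such that the `p` letters at `i` and `j`
coincide. -/
lemma key_lemma {A : Type*} {w : List A} {p : ℕ}
    (h : ∃ x₁ x₂ y₁ y₂ v : List A, w = x₁ ++ v ++ y₁ ∧ w = x₂ ++ v ++ y₂ ∧
      p ≤ v.length ∧ x₁ ≠ x₂) :
    ∃ i j, i < j ∧ j + p ≤ w.length ∧ ∀ k, k < p → w[i + k]? = w[j + k]? := by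
  obtain ⟨x₁, x₂, y₁, y₂, v, h1, h2, hv, hne⟩ := h
  have hlen : x₁.length ≠ x₂.length := by
    intro hl
    apply hne
    have : x₁ ++ (v ++ y₁) = x₂ ++ (v ++ y₂) := by
      rw [← List.append_assoc, ← List.append_assoc, ← h1, ← h2]
    exact (List.append_inj_left this hl)
  have hg : ∀ k, k < p → w[x₁.length + k]? = w[x₂.length + k]? := fun k hk => by
    rw [factor_getElem h1 (lt_of_lt_of_le hk hv), factor_getElem h2 (lt_of_lt_of_le hk hv)]
  have hb1 : x₁.length + p ≤ w.length := by
    rw [h1]; simp only [List.length_append]; omega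
  have hb2 : x₂.length + p ≤ w.length := by
    rw [h2]; simp only [List.length_append]; omega
  rcases lt_or_gt_of_ne hlen with hlt | hlt
  · exact ⟨x₁.length, x₂.length, hlt, hb2, hg⟩
  · exact ⟨x₂.length, x₁.length, hlt, hb1, fun k hk => (hg k hk).symm⟩

/-- The number of words of length `c` over `A` admitting two factorisations
`x₁vy₁` and `x₂vy₂` with `|v| ≥ p` and `x₁ ≠ x₂` is at most `c² |A|^(c-p)`. -/
theorem count_words_with_repeated_factor {A : Type*} [Fintype A]
    (c p : ℕ) (hc : 0 < c) (hp : 0 < p) (hpc : p ≤ c) :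
    Set.ncard {w : List A | w.length = c ∧
        ∃ x₁ x₂ y₁ y₂ v : List A, w = x₁ ++ v ++ y₁ ∧ w = x₂ ++ v ++ y₂ ∧
          p ≤ v.length ∧ x₁ ≠ x₂} ≤ c ^ 2 * Fintype.card A ^ (c - p) := by
  classical
  set S := {w : List A | w.length = c ∧
      ∃ x₁ x₂ y₁ y₂ v : List A, w = x₁ ++ v ++ y₁ ∧ w = x₂ ++ v ++ y₂ ∧
        p ≤ v.length ∧ x₁ ≠ x₂} with hS
  -- the encoding map
  have hchoice : ∀ w : S, ∃ i j, i < j ∧ j + p ≤ c ∧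
      ∀ k, k < p → (w : List A)[i + k]? = (w : List A)[j + k]? := by
    rintro ⟨w, hwc, hw⟩
    obtain ⟨i, j, hij, hjp, hk⟩ := key_lemma hw
    exact ⟨i, j, hij, hwc ▸ hjp, hk⟩
  choose I J hIJ hJp hEq using hchoice
  have hJc : ∀ w : S, J w < c := fun w => by have := hJp w; omega
  have hIc : ∀ w : S, I w < c := fun w => lt_trans (hIJ w) (hJc w)
  have hwlen : ∀ w : S, (w : List A).length = c := fun w => w.2.1
  have hrlen : ∀ w : S,
      ((w : List A).take (J w) ++ (w : List A).drop (J w + p)).length = c - p := fun w => by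
    simp only [List.length_append, List.length_take, List.length_drop, hwlen w]
    have := hJp w; omega
  let f : S → Fin c × Fin c × List.Vector A (c - p) := fun w =>
    ⟨⟨I w, hIc w⟩, ⟨J w, hJc w⟩,
      ⟨(w : List A).take (J w) ++ (w : List A).drop (J w + p), hrlen w⟩⟩
  have hf : Function.Injective f := by
    intro w w' hww
    have hI : I w = I w' := congrArg (fun q => (q.1 : ℕ)) hww
    have hJ : J w = J w' := congrArg (fun q => (q.2.1 : ℕ)) hww
    have hr : (w : List A).take (J w) ++ (w : List A).drop (J w + p)
        = (w' : List A).take (J w') ++ (w' : List A).drop (J w' + p) :=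
      congrArg (fun q : Fin c × Fin c × List.Vector A (c - p) => q.2.2.toList) hww
    set i := I w with hi
    set j := J w with hj
    rw [← hJ] at hr
    have hjc : j + p ≤ c := hJp w
    have htl : ((w : List A).take j).length = ((w' : List A).take j).length := by
      simp [List.length_take, hwlen w, hwlen w']
    obtain ⟨htake, hdrop⟩ := List.append_inj hr htl
    -- prove lists equal by strong induction on positions
    have hmain : ∀ m, m < c → (w : List A)[m]? = (w' : List A)[m]? := by
      intro m
      induction m using Nat.strong_induction_on with
      | _ m ih =>
        intro hm
        rcases lt_or_ge m j with hmj | hmj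
        · have := congrArg (fun l => l[m]?) htake
          simpa [List.getElem?_take, hmj] using this
        · rcases lt_or_ge m (j + p) with hmjp | hmjp
          · -- j ≤ m < j + p : use the repetition
            set k := m - j with hk
            have hkp : k < p := by omega
            have hm' : m = j + k := by omega
            have e1 := hEq w k hkp
            have e2 : (w' : List A)[i + k]? = (w' : List A)[j + k]? := by
              have := hEq w' k hkp
              rwa [← hI, ← hJ] at this
            have hik : i + k < m := by
              have := hIJ w; omega
            have hikc : i + k < c := lt_trans hik hm
            rw [hm', ← e1, ← e2]
            exact ih (i + k) hik hikc
          · -- m ≥ j + p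
            have := congrArg (fun l => l[m - (j + p)]?) hdrop
            simp only [List.getElem?_drop] at this
            have hmm : j + p + (m - (j + p)) = m := by omega
            rwa [hmm] at this
    have : (w : List A) = (w' : List A) := by
      apply List.ext_getElem?
      intro n
      rcases lt_or_ge n c with hn | hn
      · exact hmain n hn
      · rw [List.getElem?_eq_none (by rw [hwlen w]; omega),
          List.getElem?_eq_none (by rw [hwlen w']; omega)]
    exact Subtype.ext this
  have hcard : Nat.card S ≤ Nat.card (Fin c × Fin c × List.Vector A (c - p)) :=
    Nat.card_le_card_of_injective f hf
  have htarget : Nat.card (Fin c × Fin c × List.Vector A (c - p))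
      = c * (c * Fintype.card A ^ (c - p)) := by
    simp [Nat.card_prod, Nat.card_eq_fintype_card, card_vector]
  rw [htarget] at hcard
  calc S.ncard = Nat.card S := (Nat.card_coe_set_eq S).symm
    _ ≤ c * (c * Fintype.card A ^ (c - p)) := hcard
    _ = c ^ 2 * Fintype.card A ^ (c - p) := by ring
end

section
/- Fix a finite alphabet A of size at least 2, positive integers c ≥ p. If a word w of length c admits factorizations w = x₁vy₁ = x₂vy₂ with x₁ ≠ x₂ and |v| = p, then w is uniquely determined by the triple (x₁, y₁, |x₂|). -/
private lemma offset_getElem? {A : Type*} (x v y : List A) (i : ℕ) (hi : i < v.length) :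
    (x ++ v ++ y)[x.length + i]? = v[i]? := by
  rw [List.append_assoc, List.getElem?_append_right (Nat.le_add_right _ _),
    Nat.add_sub_cancel_left, List.getElem?_append_left hi]

private lemma expandR {A : Type*} (x l y : List A) (k : ℕ) (hk : x.length ≤ k) :
    (x ++ l ++ y)[k]? = (l ++ y)[k - x.length]? := by
  rw [List.append_assoc, List.getElem?_append_right hk]

private lemma expandL {A : Type*} (x l y : List A) (k : ℕ) (hk : k < x.length) :
    (x ++ l ++ y)[k]? = x[k]? := by
  rw [List.append_assoc, List.getElem?_append_left hk]

private lemma factor_determined {A : Type*} (x₁ y₁ x₂ x₂' v v' y₂ y₂' : List A)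
    (h1 : x₁ ++ v ++ y₁ = x₂ ++ v ++ y₂)
    (h2 : x₁ ++ v' ++ y₁ = x₂' ++ v' ++ y₂')
    (hv : v.length = v'.length) (hb : x₂.length = x₂'.length)
    (hne : x₁.length ≠ x₂.length) : v = v' := by
  have G1 : ∀ i, i < v.length → v[i]? = (x₁ ++ v ++ y₁)[x₂.length + i]? := by
    intro i hi
    rw [h1]
    exact (offset_getElem? x₂ v y₂ i hi).symm
  have G2 : ∀ i, i < v.length → v'[i]? = (x₁ ++ v' ++ y₁)[x₂.length + i]? := by
    intro i hi
    rw [h2, hb]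
    exact (offset_getElem? x₂' v' y₂' i (hv ▸ hi)).symm
  rcases lt_or_gt_of_ne hne with hab | hab
  · -- |x₁| < |x₂| : downward induction
    have claim : ∀ m i, v.length ≤ i + m → v[i]? = v'[i]? := by
      intro m
      induction m with
      | zero => intro i h; rw [List.getElem?_eq_none (by omega),
          List.getElem?_eq_none (by omega)]
      | succ m ih =>
        intro i h
        by_cases hi : i < v.length
        · rw [G1 i hi, G2 i hi, expandR x₁ v y₁ _ (by omega), expandR x₁ v' y₁ _ (by omega)]
          by_cases hcase : x₂.length + i - x₁.length < v.length
          · rw [List.getElem?_append_left hcase,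
              List.getElem?_append_left (by omega : x₂.length + i - x₁.length < v'.length)]
            exact ih _ (by omega)
          · rw [List.getElem?_append_right (by omega),
              List.getElem?_append_right (by omega), hv]
        · rw [List.getElem?_eq_none (by omega), List.getElem?_eq_none (by omega)]
    exact List.ext_getElem? fun i => claim v.length i (by omega)
  · -- |x₂| < |x₁| : upward strong induction
    have claim : ∀ i : ℕ, v[i]? = v'[i]? := by
      intro i
      induction i using Nat.strong_induction_on with
      | _ i ih =>
        by_cases hi : i < v.length
        · rw [G1 i hi, G2 i hi]
          by_cases hc : x₂.length + i < x₁.length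
          · rw [expandL x₁ v y₁ _ hc, expandL x₁ v' y₁ _ hc]
          · rw [expandR x₁ v y₁ _ (by omega), expandR x₁ v' y₁ _ (by omega),
              List.getElem?_append_left (by omega : x₂.length + i - x₁.length < v.length),
              List.getElem?_append_left (by omega)]
            exact ih _ (by omega)
        · rw [List.getElem?_eq_none (by omega), List.getElem?_eq_none (by omega)]
    exact List.ext_getElem? claim

/-- A word `w` of length `c` with factorisations `x₁vy₁ = x₂vy₂`, `x₁ ≠ x₂`, `|v| = p`,
is uniquely determined by the triple `(x₁, y₁, |x₂|)`. -/
theorem word_determined_by_triple {A : Type*} [Fintype A] (hA : 2 ≤ Fintype.card A)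
    (c p : ℕ) (hp : 0 < p) (hpc : p ≤ c)
    (w w' x₁ y₁ x₂ x₂' v v' y₂ y₂' : List A)
    (hwlen : w.length = c) (hw'len : w'.length = c)
    (hvlen : v.length = p) (hv'len : v'.length = p)
    (hw1 : w = x₁ ++ v ++ y₁) (hw2 : w = x₂ ++ v ++ y₂) (hx : x₁ ≠ x₂)
    (hw'1 : w' = x₁ ++ v' ++ y₁) (hw'2 : w' = x₂' ++ v' ++ y₂') (hx' : x₁ ≠ x₂')
    (hlen : x₂.length = x₂'.length) :
    w = w' := by
  have h1 : x₁ ++ v ++ y₁ = x₂ ++ v ++ y₂ := hw1 ▸ hw2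
  have h2 : x₁ ++ v' ++ y₁ = x₂' ++ v' ++ y₂' := hw'1 ▸ hw'2
  have hne : x₁.length ≠ x₂.length := by
    intro h
    rw [List.append_assoc, List.append_assoc] at h1
    exact hx (List.append_inj_left h1 h)
  have hveq : v = v' :=
    factor_determined x₁ y₁ x₂ x₂' v v' y₂ y₂' h1 h2 (by omega) hlen hne
  rw [hw1, hw'1, hveq]
end

section
/- Let A be a finite alphabet, and n, r positive integers; fix a weak composition σ of n into 2k. Then the proportion of monoid presentations over A of shape σ (equivalently, of words in A^n paired with the fixed shape σ) which have a piece of length ≥ r is at most n² · |A|^{-r}. -/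
/-- `Occurs v u j`: the word `v` occurs as a factor of `u` at position `j`. -/
def Occurs {A : Type*} (v u : List A) (j : ℕ) : Prop :=
  ∃ x y : List A, u = x ++ v ++ y ∧ x.length = j

/-- The presentation with relation words `w i` has a piece of length at least `r`:
some word of length `≥ r` occurs as a factor of the relation words in two
distinct occurrences. -/
def HasPieceGe {A : Type*} {N : ℕ} (w : Fin N → List A) (r : ℕ) : Prop :=
  ∃ v : List A, r ≤ v.length ∧
    ∃ i₁ i₂ : Fin N, ∃ j₁ j₂ : ℕ, (i₁, j₁) ≠ (i₂, j₂) ∧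
      Occurs v (w i₁) j₁ ∧ Occurs v (w i₂) j₂

private lemma occurs_len {A : Type*} {v u : List A} {j : ℕ} (h : Occurs v u j) :
    j + v.length ≤ u.length := by
  obtain ⟨x, y, hu, hx⟩ := h
  subst hu
  simp only [List.length_append]
  omega

private lemma occurs_take {A : Type*} {v u : List A} {j r : ℕ} (h : Occurs v u j)
    (hr : r ≤ v.length) : Occurs (v.take r) u j := by
  obtain ⟨x, y, hu, hx⟩ := h
  refine ⟨x, v.drop r ++ y, ?_, hx⟩
  rw [hu]
  simp only [List.append_assoc]
  rw [← List.append_assoc (v.take r) (v.drop r) y, List.take_append_drop]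

private lemma occurs_getElem? {A : Type*} {v u : List A} {j : ℕ} (h : Occurs v u j)
    {t : ℕ} (ht : t < v.length) : u[j + t]? = v[t]? := by
  obtain ⟨x, y, hu, hx⟩ := h
  subst hu
  rw [List.append_assoc, List.getElem?_append_right (by omega)]
  have h1 : j + t - x.length = t := by omega
  rw [h1, List.getElem?_append, if_pos ht]

private lemma pair_inj {n a b j j' : ℕ} (hj : j ≤ n) (hj' : j' ≤ n)
    (hEq : (n + 1) * a + j = (n + 1) * b + j') : a = b ∧ j = j' := by
  have ha : a = b := by
    have h1 : ((n + 1) * a + j) / (n + 1) = ((n + 1) * b + j') / (n + 1) := by rw [hEq]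
    rwa [Nat.mul_add_div (Nat.succ_pos n), Nat.mul_add_div (Nat.succ_pos n),
      Nat.div_eq_of_lt (Nat.lt_succ_of_le hj), Nat.div_eq_of_lt (Nat.lt_succ_of_le hj'),
      Nat.add_zero, Nat.add_zero] at h1
  subst ha
  exact ⟨rfl, Nat.add_left_cancel hEq⟩

/-- Counting lemma: the number of functions `T → A` satisfying `r` constraints, each
equating the value at `h t` with the value at a point `g t` of smaller measure, is at
most `|A| ^ (|T| - r)`. -/
private lemma card_filter_eq_le {A T : Type*} [Fintype A] [DecidableEq A]
    [Fintype T] [DecidableEq T]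
    {r : ℕ} (m : T → ℕ) (hm : Function.Injective m)
    (g h : Fin r → T) (hlt : ∀ t, m (g t) < m (h t)) (hinj : Function.Injective h) :
    (Finset.univ.filter fun f : T → A => ∀ t, f (g t) = f (h t)).card
      ≤ Fintype.card A ^ (Fintype.card T - r) := by
  classical
  set D : Finset T := Finset.image h Finset.univ with hD
  have hDcard : D.card = r := by
    rw [hD, Finset.card_image_of_injective _ hinj, Finset.card_univ, Fintype.card_fin]
  have key : ∀ f f' : T → A, (∀ t, f (g t) = f (h t)) → (∀ t, f' (g t) = f' (h t)) →
      (∀ x ∈ Dᶜ, f x = f' x) → f = f' := by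
    intro f f' hf hf' hagree
    funext x
    suffices H : ∀ M x, m x < M → f x = f' x from H (m x + 1) x (Nat.lt_succ_self _)
    intro M
    induction M with
    | zero => intro x hx; omega
    | succ M IH =>
      intro x hx
      by_cases hxD : x ∈ D
      · obtain ⟨t, -, rfl⟩ := Finset.mem_image.mp hxD
        rw [← hf t, ← hf' t]
        exact IH _ (by have := hlt t; omega)
      · exact hagree x (Finset.mem_compl.mpr hxD)
  have hle := Finset.card_le_card_of_injOn
    (s := Finset.univ.filter fun f : T → A => ∀ t, f (g t) = f (h t))
    (t := (Finset.univ : Finset ({x // x ∈ Dᶜ} → A)))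
    (fun f => fun x : {x // x ∈ Dᶜ} => f x.1)
    (fun f _ => Finset.mem_univ _)
    (by
      intro f hf f' hf' hfe
      simp only [Finset.coe_filter, Set.mem_setOf_eq, Finset.mem_univ, true_and] at hf hf'
      exact key f f' hf hf' (fun x hx => congrFun hfe ⟨x, hx⟩))
  refine hle.trans ?_
  rw [Finset.card_univ, Fintype.card_fun, Fintype.card_coe, Finset.card_compl, hDcard]

/-- The set of functions (letter assignments) satisfying the equality constraints coming
from a pair of occurrences `p`, `p'` of a common factor of length `r`. -/
private def EE {kk : ℕ} (σ : Fin kk → ℕ) {A : Type*} [Fintype A] [DecidableEq A]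
    (r : ℕ) (p p' : Fin kk × ℕ) : Finset (((i : Fin kk) × Fin (σ i)) → A) :=
  Finset.univ.filter (fun f => ∀ t, t < r →
    (if h : p.2 + t < σ p.1 then some (f ⟨p.1, ⟨p.2 + t, h⟩⟩) else none)
      = (if h : p'.2 + t < σ p'.1 then some (f ⟨p'.1, ⟨p'.2 + t, h⟩⟩) else none))

private lemma mem_EE {kk : ℕ} {σ : Fin kk → ℕ} {A : Type*} [Fintype A] [DecidableEq A]
    {r : ℕ} {p p' : Fin kk × ℕ} {f : ((i : Fin kk) × Fin (σ i)) → A} :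
    f ∈ EE σ r p p' ↔ ∀ t, t < r →
    (if h : p.2 + t < σ p.1 then some (f ⟨p.1, ⟨p.2 + t, h⟩⟩) else none)
      = (if h : p'.2 + t < σ p'.1 then some (f ⟨p'.1, ⟨p'.2 + t, h⟩⟩) else none) := by
  simp [EE]

/-- The letter of the concatenated relation words at a global position. -/
private def FF {A : Type*} {kk : ℕ} {σ : Fin kk → ℕ}
    (S : Set (Fin kk → List A)) (hlen : ∀ w : ↥S, ∀ i, (w.1 i).length = σ i)
    (w : ↥S) (x : (i : Fin kk) × Fin (σ i)) : A :=
  (w.1 x.1)[x.2.val]'(x.2.isLt.trans_le (hlen w x.1).ge)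

/-- The proportion of presentations of shape `σ` over `A` with a piece of
length at least `r` is at most `n² |A|^{-r}`. -/
theorem proportion_with_long_piece {A : Type*} [Fintype A]
    (k n r : ℕ) (hn : 0 < n) (hr : 0 < r) (σ : Fin (2 * k) → ℕ) (hσ : ∑ i, σ i = n) :
    (Set.ncard {w : Fin (2 * k) → List A |
        (∀ i, (w i).length = σ i) ∧ HasPieceGe w r} : ℝ) / (Fintype.card A : ℝ) ^ n
      ≤ (n : ℝ) ^ 2 / (Fintype.card A : ℝ) ^ r := by
  classical
  set q := Fintype.card A with hq
  set S := {w : Fin (2 * k) → List A |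
      (∀ i, (w i).length = σ i) ∧ HasPieceGe w r} with hS
  have hσn : ∀ i, σ i ≤ n :=
    fun i => hσ ▸ Finset.single_le_sum (fun _ _ => Nat.zero_le _) (Finset.mem_univ i)
  have hmemS : ∀ w : ↥S, (∀ i, (w.1 i).length = σ i) ∧ HasPieceGe w.1 r := fun w => w.2
  have key : S.ncard * q ^ r ≤ n ^ 2 * q ^ n := by
    rcases le_or_gt r n with hrn | hrn
    · -- main case
      have hTcard : Fintype.card ((i : Fin (2 * k)) × Fin (σ i)) = n := by
        rw [Fintype.card_sigma]; simpa using hσ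
      set m : ((i : Fin (2 * k)) × Fin (σ i)) → ℕ :=
        fun x => (n + 1) * x.1.val + x.2.val with hm
      have hminj : Function.Injective m := by
        rintro ⟨i, j⟩ ⟨i', j'⟩ hmm
        simp only [hm] at hmm
        obtain ⟨hi, hj⟩ := pair_inj (by have := j.isLt; have := hσn i; omega)
          (by have := j'.isLt; have := hσn i'; omega) hmm
        obtain rfl : i = i' := Fin.ext hi
        obtain rfl : j = j' := Fin.ext hj
        rfl
      set M : Fin (2 * k) × ℕ → ℕ := fun p => (n + 1) * p.1.val + p.2 with hM
      set O : Finset (Fin (2 * k) × ℕ) :=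
        (Finset.univ ×ˢ Finset.range n).filter (fun p => p.2 + r ≤ σ p.1) with hO
      have hOmem : ∀ p ∈ O, p.2 + r ≤ σ p.1 ∧ p.2 < n := by
        intro p hp
        simp only [hO, Finset.mem_filter, Finset.mem_product, Finset.mem_range] at hp
        exact ⟨hp.2, hp.1.2⟩
      have hOcard : O.card ≤ n := by
        have hsub : O ⊆ Finset.univ.biUnion (fun i => {i} ×ˢ Finset.range (σ i)) := by
          intro p hp
          simp only [Finset.mem_biUnion, Finset.mem_product, Finset.mem_singleton,
            Finset.mem_range]
          exact ⟨p.1, Finset.mem_univ _, rfl, by have := hOmem p hp; omega⟩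
        calc O.card ≤ _ := Finset.card_le_card hsub
          _ ≤ ∑ i, ({i} ×ˢ Finset.range (σ i)).card := Finset.card_biUnion_le
          _ = ∑ i, σ i := by simp
          _ = n := hσ
      have hEdir : ∀ p p', p ∈ O → p' ∈ O → M p < M p' →
          (EE σ (A := A) r p p').card ≤ q ^ (n - r) := by
        intro p p' hp hp' hMlt
        obtain ⟨hpσ, -⟩ := hOmem p hp
        obtain ⟨hp'σ, -⟩ := hOmem p' hp'
        simp only [hM] at hMlt
        have hbound := card_filter_eq_le (A := A) m hminj
          (fun t : Fin r =>
            (⟨p.1, ⟨p.2 + t.val, by have := t.isLt; omega⟩⟩ : (i : Fin (2 * k)) × Fin (σ i)))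
          (fun t : Fin r =>
            (⟨p'.1, ⟨p'.2 + t.val, by have := t.isLt; omega⟩⟩ : (i : Fin (2 * k)) × Fin (σ i)))
          (fun t => by simp only [hm]; omega)
          (fun t t' htt => by
            have h2 := congrArg m htt
            simp only [hm] at h2
            exact Fin.ext (by omega))
        refine le_trans (Finset.card_le_card ?_) (le_trans hbound (by rw [hTcard, ← hq]))
        intro f hf
        rw [mem_EE] at hf
        simp only [Finset.mem_filter, Finset.mem_univ, true_and]
        intro t
        have hc1 : p.2 + t.val < σ p.1 := by clear hbound hf; have := t.isLt; omega
        have hc2 : p'.2 + t.val < σ p'.1 := by clear hbound hf; have := t.isLt; omega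
        have h1 := hf t.val t.isLt
        rw [dif_pos hc1, dif_pos hc2] at h1
        exact Option.some.inj h1
      have hMne : ∀ p p', p ∈ O → p' ∈ O → p ≠ p' → M p ≠ M p' := by
        intro p p' hp hp' hne hMeq
        obtain ⟨-, h2⟩ := hOmem p hp
        obtain ⟨-, h2'⟩ := hOmem p' hp'
        simp only [hM] at hMeq
        obtain ⟨hi, hj⟩ := pair_inj (by omega) (by omega) hMeq
        exact hne (Prod.ext (Fin.ext hi) hj)
      have hEsymm : ∀ p p' : Fin (2 * k) × ℕ, EE σ (A := A) r p p' = EE σ (A := A) r p' p := by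
        intro p p'
        ext f
        rw [mem_EE, mem_EE]
        constructor <;> exact fun hf t ht => (hf t ht).symm
      have hEcard : ∀ p p', p ∈ O → p' ∈ O → p ≠ p' →
          (EE σ (A := A) r p p').card ≤ q ^ (n - r) := by
        intro p p' hp hp' hne
        rcases lt_or_gt_of_ne (hMne p p' hp hp' hne) with hlt | hlt
        · exact hEdir p p' hp hp' hlt
        · rw [hEsymm]; exact hEdir p' p hp' hp hlt
      set Bad : Finset (((i : Fin (2 * k)) × Fin (σ i)) → A) :=
        ((O ×ˢ O).filter fun pq => pq.1 ≠ pq.2).biUnion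
          (fun pq => EE σ (A := A) r pq.1 pq.2) with hBad
      have hBadcard : Bad.card ≤ n ^ 2 * q ^ (n - r) := by
        refine le_trans Finset.card_biUnion_le ?_
        refine le_trans (Finset.sum_le_card_nsmul _ _ (q ^ (n - r)) ?_) ?_
        · intro pq hpq
          simp only [Finset.mem_filter, Finset.mem_product] at hpq
          exact hEcard _ _ hpq.1.1 hpq.1.2 hpq.2
        · rw [smul_eq_mul]
          refine Nat.mul_le_mul_right _ ?_
          calc _ ≤ (O ×ˢ O).card := Finset.card_filter_le _ _
            _ = O.card * O.card := Finset.card_product _ _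
            _ ≤ n * n := Nat.mul_le_mul hOcard hOcard
            _ = n ^ 2 := (sq n).symm
      have hScard : S.ncard ≤ Bad.card := by
        rw [← Nat.card_coe_set_eq]
        have hlenS : ∀ w : ↥S, ∀ i, (w.1 i).length = σ i := fun w => (hmemS w).1
        have hmem : ∀ w : ↥S, FF S hlenS w ∈ Bad := by
          intro w
          obtain ⟨hlen, v, hv, i₁, i₂, j₁, j₂, hne, h₁, h₂⟩ := hmemS w
          have hvt : (v.take r).length = r := by rw [List.length_take]; omega
          have h₁' := occurs_take h₁ hv
          have h₂' := occurs_take h₂ hv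
          have hl₁ : j₁ + r ≤ σ i₁ := by
            have := occurs_len h₁'; rw [hlen i₁] at this; omega
          have hl₂ : j₂ + r ≤ σ i₂ := by
            have := occurs_len h₂'; rw [hlen i₂] at this; omega
          have hmO₁ : (i₁, j₁) ∈ O := by
            simp only [hO, Finset.mem_filter, Finset.mem_product, Finset.mem_range,
              Finset.mem_univ, true_and]
            exact ⟨by have := hσn i₁; omega, hl₁⟩
          have hmO₂ : (i₂, j₂) ∈ O := by
            simp only [hO, Finset.mem_filter, Finset.mem_product, Finset.mem_range,
              Finset.mem_univ, true_and]
            exact ⟨by have := hσn i₂; omega, hl₂⟩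
          rw [hBad]
          refine Finset.mem_biUnion.mpr ⟨((i₁, j₁), (i₂, j₂)),
            Finset.mem_filter.mpr ⟨Finset.mem_product.mpr ⟨hmO₁, hmO₂⟩, hne⟩, ?_⟩
          refine mem_EE.mpr ?_
          dsimp only
          intro t ht
          rw [dif_pos (show j₁ + t < σ i₁ by omega), dif_pos (show j₂ + t < σ i₂ by omega)]
          have e₁ : (w.1 i₁)[j₁ + t]? = (v.take r)[t]? := occurs_getElem? h₁' (by omega)
          have e₂ : (w.1 i₂)[j₂ + t]? = (v.take r)[t]? := occurs_getElem? h₂' (by omega)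
          have e3 : (w.1 i₁)[j₁ + t]? = (w.1 i₂)[j₂ + t]? := e₁.trans e₂.symm
          rw [List.getElem?_eq_getElem (by rw [hlen i₁]; omega),
            List.getElem?_eq_getElem (by rw [hlen i₂]; omega)] at e3
          simp only [FF]
          exact e3
        have hinjΦ : Function.Injective
            (fun w : ↥S => (⟨FF S hlenS w, hmem w⟩ : {f // f ∈ Bad})) := by
          intro w w' he
          have he' : FF S hlenS w = FF S hlenS w' := congrArg Subtype.val he
          apply Subtype.ext
          funext i
          refine List.ext_getElem (by rw [hlenS w i, hlenS w' i]) ?_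
          intro j hj hj'
          have hjσ : j < σ i := by rw [← hlenS w i]; exact hj
          have h5 := congrFun he' ⟨i, ⟨j, hjσ⟩⟩
          simpa only [FF] using h5
        calc Nat.card ↥S ≤ Nat.card {f // f ∈ Bad} :=
              Nat.card_le_card_of_injective _ hinjΦ
          _ = Bad.card := by rw [Nat.card_eq_fintype_card, Fintype.card_coe]
      calc S.ncard * q ^ r ≤ (n ^ 2 * q ^ (n - r)) * q ^ r :=
            Nat.mul_le_mul_right _ (hScard.trans hBadcard)
        _ = n ^ 2 * q ^ n := by
            rw [mul_assoc, ← pow_add, Nat.sub_add_cancel hrn]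
    · -- r > n : the set is empty
      have hSe : S = ∅ := by
        ext w
        simp only [hS, Set.mem_setOf_eq, Set.mem_empty_iff_false, iff_false, not_and]
        rintro hlen ⟨v, hv, i₁, i₂, j₁, j₂, hne, h₁, h₂⟩
        have := occurs_len h₁
        rw [hlen i₁] at this
        have := hσn i₁
        omega
      simp [hSe]
  rcases Nat.eq_zero_or_pos q with hq0 | hqpos
  · rw [hq0]
    push_cast
    rw [zero_pow hn.ne', zero_pow hr.ne', div_zero, div_zero]
  · have hqR : (0 : ℝ) < (q : ℝ) := by exact_mod_cast hqpos
    rw [div_le_div_iff₀ (by positivity) (by positivity)]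
    calc (S.ncard : ℝ) * (q : ℝ) ^ r = ((S.ncard * q ^ r : ℕ) : ℝ) := by push_cast; ring
      _ ≤ ((n ^ 2 * q ^ n : ℕ) : ℝ) := by exact_mod_cast key
      _ = (n : ℝ) ^ 2 * (q : ℝ) ^ n := by push_cast; ring
end

section
/- Let A be a finite alphabet with |A| ≥ 2, let k and m be positive integers. Then the set of A-generated k-relation monoid presentations satisfying C(m) is generic with respect to the sum length stratification: the proportion of presentations of total relation length n failing C(m) tends to 0 as n → ∞. -/
open Filter

/-- `v` is a piece of the presentation with relation words `w i`. -/
def IsPiece {A : Type*} {N : ℕ} (w : Fin N → List A) (v : List A) : Prop :=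
  ∃ i₁ i₂ : Fin N, ∃ j₁ j₂ : ℕ, (i₁, j₁) ≠ (i₂, j₂) ∧
    Occurs v (w i₁) j₁ ∧ Occurs v (w i₂) j₂

/-- The presentation fails `C(m)`: some relation word is a product of strictly
fewer than `m` pieces. -/
def FailsC {A : Type*} {N : ℕ} (m : ℕ) (w : Fin N → List A) : Prop :=
  ∃ i : Fin N, ∃ l : List (List A), l.length < m ∧ l.flatten = w i ∧
    ∀ v ∈ l, IsPiece w v

namespace CmAux

variable {A : Type*}

theorem occurs_le {v u : List A} {j : ℕ} (h : Occurs v u j) : j + v.length ≤ u.length := by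
  obtain ⟨x, y, rfl, rfl⟩ := h
  simp [List.length_append]

theorem occurs_getElem {v u : List A} {j r : ℕ} (h : Occurs v u j) (hr : r < v.length) :
    u[j + r]? = v[r]? := by
  obtain ⟨x, y, rfl, rfl⟩ := h
  rw [List.append_assoc, List.getElem?_append_right (by omega), Nat.add_sub_cancel_left,
    List.getElem?_append, if_pos hr]

theorem occurs_take {v u : List A} {j L : ℕ} (h : Occurs v u j) (hL : L ≤ v.length) :
    Occurs (v.take L) u j := by
  obtain ⟨x, y, rfl, rfl⟩ := h
  refine ⟨x, v.drop L ++ y, ?_, rfl⟩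
  simp only [List.append_assoc]
  rw [← List.append_assoc (v.take L), List.take_append_drop]

/-- Overwrite `u` at positions `[j, j + v.length)` by `v`. -/
def ow (u : List A) (j : ℕ) (v : List A) : List A :=
  u.take j ++ v ++ u.drop (j + v.length)

theorem length_ow {u v : List A} {j : ℕ} (h : j + v.length ≤ u.length) :
    (ow u j v).length = u.length := by
  simp [ow]; omega

theorem getElem?_ow_lt {u v : List A} {j t : ℕ} (h : j + v.length ≤ u.length) (ht : t < j) :
    (ow u j v)[t]? = u[t]? := by
  rw [ow, List.append_assoc, List.getElem?_append, if_pos (by simp; omega), List.getElem?_take,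
    if_pos ht]

theorem getElem?_ow_ge {u v : List A} {j t : ℕ} (h : j + v.length ≤ u.length)
    (ht : j + v.length ≤ t) :
    (ow u j v)[t]? = u[t]? := by
  have h1 : (u.take j).length = j := by simp; omega
  rw [ow, List.append_assoc, List.getElem?_append_right (by omega), h1,
    List.getElem?_append_right (by omega), List.getElem?_drop]
  congr 1
  omega

theorem getElem?_ow_mid {u v : List A} {j r : ℕ} (h : j + v.length ≤ u.length)
    (hr : r < v.length) :
    (ow u j v)[j + r]? = v[r]? := by
  have h1 : (u.take j).length = j := by simp; omega
  rw [ow, List.append_assoc, List.getElem?_append_right (by omega), h1,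
    Nat.add_sub_cancel_left, List.getElem?_append, if_pos hr]

theorem rigidity {Nn : ℕ} {w w' : Fin Nn → List A} {i₁ i₂ : Fin Nn} {j₁ j₂ L : ℕ}
    (hord : i₁ = i₂ → j₁ < j₂)
    (hout : ∀ i t, (i = i₂ → t < j₂ ∨ j₂ + L ≤ t) → (w i)[t]? = (w' i)[t]?)
    (hw : ∃ v : List A, v.length = L ∧ Occurs v (w i₁) j₁ ∧ Occurs v (w i₂) j₂)
    (hw' : ∃ v : List A, v.length = L ∧ Occurs v (w' i₁) j₁ ∧ Occurs v (w' i₂) j₂) :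
    w = w' := by
  obtain ⟨v, hvL, hv1, hv2⟩ := hw
  obtain ⟨v', hvL', hv1', hv2'⟩ := hw'
  have key : ∀ t : ℕ, (w i₂)[t]? = (w' i₂)[t]? := by
    intro t
    induction t using Nat.strong_induction_on with
    | _ t ih =>
      by_cases hmem : t < j₂ ∨ j₂ + L ≤ t
      · exact hout i₂ t (fun _ => hmem)
      · push_neg at hmem
        obtain ⟨h1, h2⟩ := hmem
        have htr : t = j₂ + (t - j₂) := by omega
        have hrL : t - j₂ < L := by omega
        have e1 : (w i₂)[t]? = (w i₁)[j₁ + (t - j₂)]? := by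
          rw [htr, occurs_getElem hv2 (by omega), ← occurs_getElem hv1 (by omega), Nat.add_sub_cancel_left]
        have e2 : (w' i₂)[t]? = (w' i₁)[j₁ + (t - j₂)]? := by
          rw [htr, occurs_getElem hv2' (by omega), ← occurs_getElem hv1' (by omega), Nat.add_sub_cancel_left]
        rw [e1, e2]
        by_cases hi : i₁ = i₂
        · have hj := hord hi
          rw [hi]
          exact ih (j₁ + (t - j₂)) (by omega)
        · exact hout i₁ _ (fun h => absurd h hi)
  funext i
  by_cases hi : i = i₂
  · subst hi; exact List.ext_getElem? key
  · exact List.ext_getElem? (fun t => hout i t (fun h => absurd h hi))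

theorem len_le_sum {Nn n : ℕ} {w : Fin Nn → List A} (hw : ∑ i, (w i).length = n) (i : Fin Nn) :
    (w i).length ≤ n := by
  rw [← hw]
  exact Finset.single_le_sum (f := fun i => (w i).length) (fun _ _ => Nat.zero_le _)
    (Finset.mem_univ i)

theorem finite_pres [Finite A] (Nn n : ℕ) :
    Finite {w : Fin Nn → List A // ∑ i, (w i).length = n} := by
  have : Finite {l : List A | l.length ≤ n} := (List.finite_length_le A n).to_subtype
  exact Finite.of_injective
    (fun w => (fun i => ⟨w.1 i, len_le_sum w.2 i⟩ : Fin Nn → {l : List A | l.length ≤ n}))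
    (by
      intro a b hab
      apply Subtype.ext; funext i
      have := congrFun hab i
      exact congrArg Subtype.val this)

theorem finite_sub [Finite A] (Nn n : ℕ) (P : (Fin Nn → List A) → Prop) :
    Finite {w : Fin Nn → List A // (∑ i, (w i).length = n) ∧ P w} := by
  have := finite_pres (A := A) Nn n
  refine Finite.of_injective
    (fun w => (⟨w.1, w.2.1⟩ : {w : Fin Nn → List A // ∑ i, (w i).length = n})) ?_
  intro a b hab
  simp only [Subtype.mk.injEq] at hab
  exact Subtype.ext hab

/-- A normalized matched pair of occurrences of a common factor of length `L`. -/
def MatchP {Nn : ℕ} (w : Fin Nn → List A) (L : ℕ) (p : (Fin Nn × ℕ) × (Fin Nn × ℕ)) : Prop :=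
  (p.1.1 = p.2.1 → p.1.2 < p.2.2) ∧
  ∃ v : List A, v.length = L ∧ Occurs v (w p.1.1) p.1.2 ∧ Occurs v (w p.2.1) p.2.2

theorem sum_update_ow {Nn : ℕ} {w : Fin Nn → List A} {i₂ : Fin Nn} {j₂ : ℕ} {v : List A}
    (h : j₂ + v.length ≤ (w i₂).length) :
    ∑ i, ((Function.update w i₂ (ow (w i₂) j₂ v)) i).length = ∑ i, (w i).length := by
  apply Finset.sum_congr rfl
  intro i _
  by_cases hi : i = i₂
  · subst hi; rw [Function.update_self, length_ow h]
  · rw [Function.update_of_ne hi]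

theorem bad2_step {Nn L : ℕ} {w w' : Fin Nn → List A} {i₁ i₂ : Fin Nn} {j₁ j₂ : ℕ}
    {f f' : Fin L → A}
    (hM : MatchP w L ((i₁, j₁), (i₂, j₂))) (hM' : MatchP w' L ((i₁, j₁), (i₂, j₂)))
    (hW : Function.update w i₂ (ow (w i₂) j₂ (List.ofFn f))
        = Function.update w' i₂ (ow (w' i₂) j₂ (List.ofFn f'))) :
    w = w' ∧ f = f' := by
  simp only [MatchP] at hM hM'
  obtain ⟨hord, v, hvL, hv1, hv2⟩ := hM
  obtain ⟨hord', v', hvL', hv1', hv2'⟩ := hM'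
  have hlen2 : j₂ + L ≤ (w i₂).length := by have := occurs_le hv2; omega
  have hlen2' : j₂ + L ≤ (w' i₂).length := by have := occurs_le hv2'; omega
  have hlf : j₂ + (List.ofFn f).length ≤ (w i₂).length := by
    rw [List.length_ofFn]; omega
  have hlf' : j₂ + (List.ofFn f').length ≤ (w' i₂).length := by
    rw [List.length_ofFn]; omega
  have e : ow (w i₂) j₂ (List.ofFn f) = ow (w' i₂) j₂ (List.ofFn f') := by
    have := congrFun hW i₂
    rwa [Function.update_self, Function.update_self] at this
  have hout : ∀ i (t : ℕ), (i = i₂ → t < j₂ ∨ j₂ + L ≤ t) → (w i)[t]? = (w' i)[t]? := by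
    intro i t hcond
    by_cases hi : i = i₂
    · subst hi
      rcases hcond rfl with hlt | hge
      · rw [← getElem?_ow_lt hlf hlt, e, getElem?_ow_lt hlf' hlt]
      · rw [← getElem?_ow_ge hlf (by rw [List.length_ofFn]; omega), e,
          getElem?_ow_ge hlf' (by rw [List.length_ofFn]; omega)]
    · have := congrFun hW i
      rw [Function.update_of_ne hi, Function.update_of_ne hi] at this
      rw [this]
  have hww : w = w' :=
    rigidity hord hout ⟨v, hvL, hv1, hv2⟩ ⟨v', hvL', hv1', hv2'⟩
  subst hww
  refine ⟨rfl, ?_⟩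
  have hff : List.ofFn f = List.ofFn f' := by
    have e2 := e
    unfold ow at e2
    rw [List.length_ofFn, List.length_ofFn] at e2
    exact List.append_cancel_left (List.append_cancel_right e2)
  funext r
  have := congrArg (fun l => l[(r : ℕ)]?) hff
  simpa [List.getElem?_ofFn] using this

section Bad2

variable [Fintype A]

theorem bad2_card (Nn n L : ℕ) :
    Nat.card {w : Fin Nn → List A // (∑ i, (w i).length = n) ∧ ∃ p, MatchP w L p}
      * Fintype.card A ^ L
    ≤ Nat.card {w : Fin Nn → List A // ∑ i, (w i).length = n}
      * (Nn * Nn * ((n + 1) * (n + 1))) := by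
  classical
  have hfinT := finite_pres (A := A) Nn n
  have hfinS := finite_sub (A := A) Nn n (fun w => ∃ p, MatchP w L p)
  rw [show Fintype.card A ^ L = Nat.card (Fin L → A) by
        simp [Nat.card_eq_fintype_card, Fintype.card_fun],
      show Nn * Nn * ((n + 1) * (n + 1)) = Nat.card (Fin Nn × Fin Nn × Fin (n+1) × Fin (n+1)) by
        simp [Nat.card_eq_fintype_card]; ring,
      ← Nat.card_prod, ← Nat.card_prod]
  have key : ∀ (w : Fin Nn → List A), (∑ i, (w i).length = n) →
      ∀ (hex : ∃ p, MatchP w L p) (f : Fin L → A),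
      (∑ i, ((Function.update w hex.choose.2.1
          (ow (w hex.choose.2.1) hex.choose.2.2 (List.ofFn f))) i).length = n)
      ∧ hex.choose.1.2 < n + 1 ∧ hex.choose.2.2 < n + 1 := by
    intro w hw hex f
    obtain ⟨hord, v, hvL, hv1, hv2⟩ := hex.choose_spec
    have h2 := occurs_le hv2
    have h1 := occurs_le hv1
    refine ⟨?_, ?_, ?_⟩
    · rw [sum_update_ow (by rw [List.length_ofFn]; omega)]; exact hw
    · have := len_le_sum hw hex.choose.1.1; omega
    · have := len_le_sum hw hex.choose.2.1; omega
  set F : {w : Fin Nn → List A // (∑ i, (w i).length = n) ∧ ∃ p, MatchP w L p} × (Fin L → A) →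
      {w : Fin Nn → List A // ∑ i, (w i).length = n}
        × (Fin Nn × Fin Nn × Fin (n+1) × Fin (n+1)) :=
    fun x => (⟨Function.update x.1.1 x.1.2.2.choose.2.1
          (ow (x.1.1 x.1.2.2.choose.2.1) x.1.2.2.choose.2.2 (List.ofFn x.2)),
          (key x.1.1 x.1.2.1 x.1.2.2 x.2).1⟩,
        (x.1.2.2.choose.1.1, x.1.2.2.choose.2.1,
         ⟨x.1.2.2.choose.1.2, (key x.1.1 x.1.2.1 x.1.2.2 x.2).2.1⟩,
         ⟨x.1.2.2.choose.2.2, (key x.1.1 x.1.2.1 x.1.2.2 x.2).2.2⟩)) with hF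
  apply Nat.card_le_card_of_injective F
  rintro ⟨⟨w, hw, hex⟩, f⟩ ⟨⟨w', hw', hex'⟩, f'⟩ h
  simp only [hF, Prod.mk.injEq, Subtype.mk.injEq, Fin.mk.injEq] at h
  obtain ⟨hWW, hi1, hi2, hj1, hj2⟩ := h
  have hM : MatchP w L ((hex.choose.1.1, hex.choose.1.2), (hex.choose.2.1, hex.choose.2.2)) :=
    hex.choose_spec
  have hM' : MatchP w' L ((hex.choose.1.1, hex.choose.1.2), (hex.choose.2.1, hex.choose.2.2)) := by
    have h0 : MatchP w' L ((hex'.choose.1.1, hex'.choose.1.2),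
        (hex'.choose.2.1, hex'.choose.2.2)) := hex'.choose_spec
    rw [← hi1, ← hi2, ← hj1, ← hj2] at h0
    exact h0
  rw [← hi2, ← hj2] at hWW
  obtain ⟨hww, hff⟩ := bad2_step hM hM' hWW
  subst hww; subst hff
  rfl

end Bad2
section Bad1

def partSum {Nn : ℕ} (g : Fin Nn → ℕ) (t : ℕ) : ℕ :=
  ∑ i ∈ Finset.univ.filter (fun i : Fin Nn => i.val < t), g i

theorem partSum_zero {Nn : ℕ} (g : Fin Nn → ℕ) : partSum g 0 = 0 := by
  simp [partSum]

theorem partSum_succ {Nn : ℕ} (g : Fin Nn → ℕ) {t : ℕ} (ht : t < Nn) :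
    partSum g (t + 1) = partSum g t + g ⟨t, ht⟩ := by
  classical
  have h : Finset.univ.filter (fun i : Fin Nn => i.val < t + 1)
      = insert (⟨t, ht⟩ : Fin Nn) (Finset.univ.filter (fun i : Fin Nn => i.val < t)) := by
    ext i
    simp only [Finset.mem_filter, Finset.mem_univ, true_and, Finset.mem_insert, Fin.ext_iff]
    omega
  rw [partSum, h, Finset.sum_insert (by simp)]
  rw [partSum]; ring

theorem partSum_all {Nn : ℕ} (g : Fin Nn → ℕ) : partSum g Nn = ∑ i, g i := by
  rw [partSum]
  congr 1
  ext i
  simp [i.isLt]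

def splitIdx {Nn : ℕ} (g : Fin Nn → ℕ) (s : ℕ) : ℕ :=
  Nat.findGreatest (fun t => partSum g t ≤ s) Nn

theorem splitIdx_le {Nn : ℕ} (g : Fin Nn → ℕ) (s : ℕ) : partSum g (splitIdx g s) ≤ s :=
  Nat.findGreatest_spec (P := fun t => partSum g t ≤ s) (Nat.zero_le Nn)
    (by simp [partSum_zero])

theorem splitIdx_lt {Nn : ℕ} {g : Fin Nn → ℕ} {s : ℕ} (hs : s < ∑ i, g i) :
    splitIdx g s < Nn := by
  rcases Nat.lt_or_ge (splitIdx g s) Nn with h | h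
  · exact h
  · exfalso
    have h1 : splitIdx g s = Nn := le_antisymm (Nat.findGreatest_le _) h
    have := splitIdx_le g s
    rw [h1, partSum_all] at this
    omega

theorem splitIdx_spec2 {Nn : ℕ} {g : Fin Nn → ℕ} {s : ℕ} (hs : s < ∑ i, g i) :
    s < partSum g (splitIdx g s) + g ⟨splitIdx g s, splitIdx_lt hs⟩ := by
  have h1 : ¬ partSum g (splitIdx g s + 1) ≤ s :=
    Nat.findGreatest_is_greatest (P := fun t => partSum g t ≤ s) (lt_add_one _)
      (by have := splitIdx_lt hs; omega)
  rw [partSum_succ g (splitIdx_lt hs)] at h1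
  omega

variable {A : Type*}

/-- The forward map for the short-word injection: move the first `r` letters of word `jF`
to the end of word `i₀`. -/
def bad1W {Nn : ℕ} (w : Fin Nn → List A) (i₀ jF : Fin Nn) (r : ℕ) : Fin Nn → List A :=
  Function.update (Function.update w i₀ (w i₀ ++ (w jF).take r)) jF ((w jF).drop r)

def bad1Back {Nn : ℕ} (W : Fin Nn → List A) (i₀ jF : Fin Nn) (b : ℕ) : Fin Nn → List A :=
  fun i => if i = i₀ then (W i₀).take b else if i = jF then (W i₀).drop b ++ W jF else W i

theorem bad1W_apply_i₀ {Nn : ℕ} (w : Fin Nn → List A) {i₀ jF : Fin Nn} (r : ℕ)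
    (h : i₀ ≠ jF) : bad1W w i₀ jF r i₀ = w i₀ ++ (w jF).take r := by
  rw [bad1W, Function.update_of_ne h, Function.update_self]

theorem bad1W_apply_jF {Nn : ℕ} (w : Fin Nn → List A) (i₀ : Fin Nn) {jF : Fin Nn} (r : ℕ) :
    bad1W w i₀ jF r jF = (w jF).drop r := by
  rw [bad1W, Function.update_self]

theorem bad1W_apply {Nn : ℕ} (w : Fin Nn → List A) {i₀ jF i : Fin Nn} (r : ℕ)
    (h0 : i ≠ i₀) (hj : i ≠ jF) : bad1W w i₀ jF r i = w i := by
  rw [bad1W, Function.update_of_ne hj, Function.update_of_ne h0]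

theorem bad1_back_spec {Nn : ℕ} {w : Fin Nn → List A} {i₀ jF : Fin Nn} {r : ℕ}
    (h : i₀ ≠ jF) (hr : r ≤ (w jF).length) :
    bad1Back (bad1W w i₀ jF r) i₀ jF ((w i₀).length) = w := by
  funext i
  rw [bad1Back]
  by_cases h0 : i = i₀
  · subst h0
    rw [if_pos rfl, bad1W_apply_i₀ w r h, List.take_left]
  · rw [if_neg h0]
    by_cases hj : i = jF
    · subst hj
      rw [if_pos rfl, bad1W_apply_i₀ w r h, bad1W_apply_jF, List.drop_left,
        List.take_append_drop]
    · rw [if_neg hj, bad1W_apply w r h0 hj]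

theorem bad1W_sum {Nn : ℕ} {w : Fin Nn → List A} {i₀ jF : Fin Nn} {r : ℕ}
    (h : i₀ ≠ jF) (hr : r ≤ (w jF).length) :
    ∑ i, (bad1W w i₀ jF r i).length = ∑ i, (w i).length := by
  classical
  have hjm : jF ∈ (Finset.univ : Finset (Fin Nn)).erase i₀ :=
    Finset.mem_erase.mpr ⟨Ne.symm h, Finset.mem_univ _⟩
  have key : ∀ f : Fin Nn → ℕ,
      ∑ i, f i = f i₀ + (f jF + ∑ i ∈ (Finset.univ.erase i₀).erase jF, f i) := by
    intro f
    rw [Finset.add_sum_erase _ f hjm, Finset.add_sum_erase _ f (Finset.mem_univ i₀)]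
  rw [key (fun i => (bad1W w i₀ jF r i).length), key (fun i => (w i).length)]
  have h1 : (bad1W w i₀ jF r i₀).length = (w i₀).length + r := by
    rw [bad1W_apply_i₀ w r h]
    simp [List.length_append, List.length_take]
    omega
  have h2 : (bad1W w i₀ jF r jF).length = (w jF).length - r := by
    rw [bad1W_apply_jF, List.length_drop]
  have h3 : ∑ i ∈ (Finset.univ.erase i₀).erase jF, (bad1W w i₀ jF r i).length
      = ∑ i ∈ (Finset.univ.erase i₀).erase jF, (w i).length := by
    apply Finset.sum_congr rfl
    intro i hi
    simp only [Finset.mem_erase] at hi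
    rw [bad1W_apply w r hi.2.1 hi.1]
  rw [h1, h2, h3]
  omega

/-- Lengths of the words other than `i₀` (with `i₀` counted as `0`). -/
def bad1g {Nn : ℕ} (w : Fin Nn → List A) (i₀ : Fin Nn) : Fin Nn → ℕ :=
  fun i => if i = i₀ then 0 else (w i).length

theorem bad1_card [Fintype A] (Nn n B : ℕ) :
    Nat.card {w : Fin Nn → List A // (∑ i, (w i).length = n) ∧ ∃ i, (w i).length ≤ B}
      * (n - B)
    ≤ Nat.card {w : Fin Nn → List A // ∑ i, (w i).length = n} * (Nn * Nn * (B + 1)) := by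
  classical
  have hfinT := finite_pres (A := A) Nn n
  have hfinS := finite_sub (A := A) Nn n (fun w => ∃ i, (w i).length ≤ B)
  rcases le_or_gt n B with hnB | hnB
  · rw [Nat.sub_eq_zero_of_le hnB, Nat.mul_zero]
    exact Nat.zero_le _
  rw [show (n - B) = Nat.card (Fin (n - B)) by simp [Nat.card_eq_fintype_card],
      show Nn * Nn * (B + 1) = Nat.card (Fin Nn × Fin Nn × Fin (B + 1)) by
        simp [Nat.card_eq_fintype_card]; ring,
      ← Nat.card_prod, ← Nat.card_prod]
  -- data construction
  have key : ∀ (w : Fin Nn → List A), (∑ i, (w i).length = n) →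
      ∀ (hex : ∃ i, (w i).length ≤ B) (s : Fin (n - B)),
      ∃ (jlt : splitIdx (bad1g w hex.choose) s.val < Nn),
      (⟨splitIdx (bad1g w hex.choose) s.val, jlt⟩ : Fin Nn) ≠ hex.choose
      ∧ (s.val - partSum (bad1g w hex.choose) (splitIdx (bad1g w hex.choose) s.val))
          < (w ⟨splitIdx (bad1g w hex.choose) s.val, jlt⟩).length := by
    intro w hw hex s
    set i₀ := hex.choose with hi₀
    have hb : (w i₀).length ≤ B := hex.choose_spec
    set g : Fin Nn → ℕ := bad1g w i₀ with hg
    have hsum : (∑ i, g i) + (w i₀).length = n := by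
      rw [← hw, ← Finset.add_sum_erase _ (fun i => (w i).length) (Finset.mem_univ i₀),
        ← Finset.add_sum_erase _ g (Finset.mem_univ i₀)]
      have : ∑ i ∈ Finset.univ.erase i₀, g i = ∑ i ∈ Finset.univ.erase i₀, (w i).length := by
        apply Finset.sum_congr rfl
        intro i hi
        simp only [Finset.mem_erase] at hi
        simp [hg, bad1g, hi.1]
      rw [this]
      simp [hg, bad1g]
      ring
    have hs : s.val < ∑ i, g i := by
      have := s.isLt
      omega
    refine ⟨splitIdx_lt hs, ?_, ?_⟩
    · intro hcon
      have h2 := splitIdx_spec2 hs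
      have h1 := splitIdx_le g s.val
      have : g ⟨splitIdx g s.val, splitIdx_lt hs⟩ = 0 := by
        rw [hcon]
        show (if i₀ = i₀ then 0 else (w i₀).length) = 0
        rw [if_pos rfl]
      omega
    · have h2 := splitIdx_spec2 hs
      have h1 := splitIdx_le g s.val
      have hne : (⟨splitIdx g s.val, splitIdx_lt hs⟩ : Fin Nn) ≠ i₀ := by
        intro hcon
        have : g ⟨splitIdx g s.val, splitIdx_lt hs⟩ = 0 := by
          rw [hcon]
          show (if i₀ = i₀ then 0 else (w i₀).length) = 0
          rw [if_pos rfl]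
        omega
      have : g ⟨splitIdx g s.val, splitIdx_lt hs⟩
          = (w ⟨splitIdx g s.val, splitIdx_lt hs⟩).length := by
        show (if (⟨splitIdx g s.val, splitIdx_lt hs⟩ : Fin Nn) = i₀ then 0
            else (w ⟨splitIdx g s.val, splitIdx_lt hs⟩).length) = _
        rw [if_neg hne]
      omega
  set F : {w : Fin Nn → List A // (∑ i, (w i).length = n) ∧ ∃ i, (w i).length ≤ B}
      × Fin (n - B) →
      {w : Fin Nn → List A // ∑ i, (w i).length = n} × (Fin Nn × Fin Nn × Fin (B + 1)) :=
    fun x =>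
      (⟨bad1W x.1.1 x.1.2.2.choose
          ⟨splitIdx (bad1g x.1.1 x.1.2.2.choose) x.2.val,
            (key x.1.1 x.1.2.1 x.1.2.2 x.2).choose⟩
          (x.2.val - partSum (bad1g x.1.1 x.1.2.2.choose)
            (splitIdx (bad1g x.1.1 x.1.2.2.choose) x.2.val)),
        by
          have hsp := (key x.1.1 x.1.2.1 x.1.2.2 x.2).choose_spec
          rw [bad1W_sum (Ne.symm hsp.1) (le_of_lt hsp.2)]
          exact x.1.2.1⟩,
       (x.1.2.2.choose,
        ⟨splitIdx (bad1g x.1.1 x.1.2.2.choose) x.2.val,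
          (key x.1.1 x.1.2.1 x.1.2.2 x.2).choose⟩,
        ⟨(x.1.1 x.1.2.2.choose).length,
          Nat.lt_succ_of_le x.1.2.2.choose_spec⟩)) with hF
  apply Nat.card_le_card_of_injective F
  rintro ⟨⟨w, hw, hex⟩, s⟩ ⟨⟨w', hw', hex'⟩, s'⟩ h
  simp only [hF, Prod.mk.injEq, Subtype.mk.injEq, Fin.mk.injEq] at h
  obtain ⟨hW, hi0, hj, hb⟩ := h
  have hsp := (key w hw hex s).choose_spec
  have hsp' := (key w' hw' hex' s').choose_spec
  have hjF : (⟨splitIdx (bad1g w hex.choose) s.val,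
        (key w hw hex s).choose⟩ : Fin Nn)
      = ⟨splitIdx (bad1g w' hex'.choose) s'.val, (key w' hw' hex' s').choose⟩ :=
    Fin.ext hj
  have e1 := bad1_back_spec (w := w) (Ne.symm hsp.1) (le_of_lt hsp.2)
  have e1' := bad1_back_spec (w := w') (Ne.symm hsp'.1) (le_of_lt hsp'.2)
  have hww : w = w' := by
    calc w = bad1Back (bad1W w hex.choose
          ⟨splitIdx (bad1g w hex.choose) s.val, (key w hw hex s).choose⟩
          (s.val - partSum (bad1g w hex.choose) (splitIdx (bad1g w hex.choose) s.val)))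
          hex.choose
          ⟨splitIdx (bad1g w hex.choose) s.val, (key w hw hex s).choose⟩
          ((w hex.choose).length) := e1.symm
      _ = bad1Back (bad1W w' hex'.choose
          ⟨splitIdx (bad1g w' hex'.choose) s'.val, (key w' hw' hex' s').choose⟩
          (s'.val - partSum (bad1g w' hex'.choose)
            (splitIdx (bad1g w' hex'.choose) s'.val)))
          hex'.choose
          ⟨splitIdx (bad1g w' hex'.choose) s'.val, (key w' hw' hex' s').choose⟩
          ((w' hex'.choose).length) := by rw [hW, hjF, hb, hi0]
      _ = w' := e1'
  -- now recover s = s'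
  have hlen : (bad1W w hex.choose
        ⟨splitIdx (bad1g w hex.choose) s.val, (key w hw hex s).choose⟩
        (s.val - partSum (bad1g w hex.choose) (splitIdx (bad1g w hex.choose) s.val))
        hex.choose).length
      = (w hex.choose).length
        + (s.val - partSum (bad1g w hex.choose) (splitIdx (bad1g w hex.choose) s.val)) := by
    rw [bad1W_apply_i₀ _ _ (Ne.symm hsp.1)]
    have := le_of_lt hsp.2
    simp [List.length_append, List.length_take]
    omega
  have hlen' : (bad1W w' hex'.choose
        ⟨splitIdx (bad1g w' hex'.choose) s'.val, (key w' hw' hex' s').choose⟩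
        (s'.val - partSum (bad1g w' hex'.choose)
          (splitIdx (bad1g w' hex'.choose) s'.val))
        hex'.choose).length
      = (w' hex'.choose).length
        + (s'.val - partSum (bad1g w' hex'.choose)
          (splitIdx (bad1g w' hex'.choose) s'.val)) := by
    rw [bad1W_apply_i₀ _ _ (Ne.symm hsp'.1)]
    have := le_of_lt hsp'.2
    simp [List.length_append, List.length_take]
    omega
  have hWlen : (bad1W w hex.choose
        ⟨splitIdx (bad1g w hex.choose) s.val, (key w hw hex s).choose⟩
        (s.val - partSum (bad1g w hex.choose) (splitIdx (bad1g w hex.choose) s.val))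
        hex.choose).length
      = (bad1W w' hex'.choose
        ⟨splitIdx (bad1g w' hex'.choose) s'.val, (key w' hw' hex' s').choose⟩
        (s'.val - partSum (bad1g w' hex'.choose)
          (splitIdx (bad1g w' hex'.choose) s'.val))
        hex'.choose).length := by
    rw [hW, hi0]
  have hgg : bad1g w hex.choose = bad1g w' hex'.choose := by
    funext i
    show (if i = hex.choose then 0 else (w i).length)
        = (if i = hex'.choose then 0 else (w' i).length)
    rw [← hi0, ← congrFun hww i]
  have hps : partSum (bad1g w hex.choose) (splitIdx (bad1g w hex.choose) s.val)
      = partSum (bad1g w' hex'.choose) (splitIdx (bad1g w' hex'.choose) s'.val) := by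
    rw [hj, hgg]
  have hle1 := splitIdx_le (bad1g w hex.choose) s.val
  have hle2 := splitIdx_le (bad1g w' hex'.choose) s'.val
  have hss : s.val = s'.val := by omega
  subst hww
  refine Prod.ext (Subtype.ext rfl) (Fin.ext hss)

end Bad1

section Split

variable {A : Type*}

theorem failsC_cases {Nn m L : ℕ} {w : Fin Nn → List A} (hf : FailsC m w) :
    (∃ i, (w i).length ≤ m * L) ∨ (∃ p, MatchP w L p) := by
  obtain ⟨i, l, hlm, hfl, hp⟩ := hf
  by_cases hex : ∃ v ∈ l, L ≤ v.length
  · right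
    obtain ⟨v, hvl, hvL⟩ := hex
    obtain ⟨i₁, i₂, j₁, j₂, hne, h1, h2⟩ := hp v hvl
    have hlen : (v.take L).length = L := by simp [hvL]
    have ho1 := occurs_take h1 hvL
    have ho2 := occurs_take h2 hvL
    by_cases hi : i₁ = i₂
    · have hj : j₁ ≠ j₂ := by
        intro hcon
        exact hne (by rw [hi, hcon])
      rcases lt_or_gt_of_ne hj with hjlt | hjgt
      · exact ⟨((i₁, j₁), (i₂, j₂)), fun _ => hjlt, v.take L, hlen, ho1, ho2⟩
      · exact ⟨((i₂, j₂), (i₁, j₁)), fun _ => hjgt, v.take L, hlen, ho2, ho1⟩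
    · exact ⟨((i₁, j₁), (i₂, j₂)), fun h => absurd h hi, v.take L, hlen, ho1, ho2⟩
  · left
    push_neg at hex
    refine ⟨i, ?_⟩
    rw [← hfl, List.length_flatten]
    calc (l.map List.length).sum ≤ (l.map List.length).length • L := by
          apply List.sum_le_card_nsmul
          intro x hx
          simp only [List.mem_map] at hx
          obtain ⟨v, hv, rfl⟩ := hx
          exact le_of_lt (hex v hv)
      _ ≤ m * L := by
          simp only [List.length_map, smul_eq_mul]
          exact Nat.mul_le_mul_right L (le_of_lt hlm)

theorem bad_split [Fintype A] (Nn n L m : ℕ) :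
    Nat.card {w : Fin Nn → List A // (∑ i, (w i).length = n) ∧ FailsC m w}
    ≤ Nat.card {w : Fin Nn → List A // (∑ i, (w i).length = n) ∧ ∃ i, (w i).length ≤ m * L}
      + Nat.card {w : Fin Nn → List A // (∑ i, (w i).length = n) ∧ ∃ p, MatchP w L p} := by
  classical
  have f1 := finite_sub (A := A) Nn n (fun w => ∃ i, (w i).length ≤ m * L)
  have f2 := finite_sub (A := A) Nn n (fun w => ∃ p, MatchP w L p)
  have f3 := finite_sub (A := A) Nn n (FailsC m)
  rw [← Nat.card_sum]
  apply Nat.card_le_card_of_injective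
    (f := fun x : {w : Fin Nn → List A // (∑ i, (w i).length = n) ∧ FailsC m w} =>
      if h : ∃ p, MatchP x.1 L p then
        Sum.inr ⟨x.1, x.2.1, h⟩
      else
        Sum.inl (⟨x.1, x.2.1, (failsC_cases x.2.2).resolve_right h⟩ :
          {w : Fin Nn → List A // (∑ i, (w i).length = n) ∧ ∃ i, (w i).length ≤ m * L}))
  intro a b hab
  by_cases ha : ∃ p, MatchP a.1 L p <;> by_cases hb : ∃ p, MatchP b.1 L p <;>
    simp only [ha, hb, dif_pos, dif_neg, not_false_iff] at hab
  · rw [Sum.inr.injEq, Subtype.mk.injEq] at hab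
    exact Subtype.ext hab
  · exact absurd hab (by simp)
  · exact absurd hab (by simp)
  · rw [Sum.inl.injEq, Subtype.mk.injEq] at hab
    exact Subtype.ext hab

theorem pres_nonempty [Fintype A] [Nonempty A] {Nn : ℕ} (hNn : 0 < Nn) (n : ℕ) :
    0 < Nat.card {w : Fin Nn → List A // ∑ i, (w i).length = n} := by
  classical
  have hfin := finite_pres (A := A) Nn n
  rw [Nat.card_pos_iff]
  refine ⟨⟨⟨fun i => if i = ⟨0, hNn⟩ then List.replicate n (Classical.arbitrary A) else [], ?_⟩⟩,
    hfin⟩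
  have hcong : ∀ i : Fin Nn,
      ((fun i => if i = ⟨0, hNn⟩ then List.replicate n (Classical.arbitrary A) else []) i).length
      = if i = ⟨0, hNn⟩ then n else 0 := by
    intro i
    by_cases hi : i = ⟨0, hNn⟩ <;> simp [hi]
  rw [Finset.sum_congr rfl (fun i _ => hcong i), Finset.sum_ite_eq']
  simp

end Split


end CmAux

open CmAux

/-- With respect to the sum length stratification, the proportion of `A`-generated
`k`-relation monoid presentations of sum relation length `n` which fail `C(m)`
tends to `0` as `n → ∞`: `C(m)` is generic. -/
theorem Cm_generic_sum_length {A : Type*} [Fintype A] (hA : 2 ≤ Fintype.card A)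
    (k m : ℕ) (hk : 0 < k) (hm : 0 < m) :
    Tendsto (fun n =>
        (Nat.card {w : Fin (2 * k) → List A //
            (∑ i, (w i).length) = n ∧ FailsC m w} : ℝ) /
        (Nat.card {w : Fin (2 * k) → List A // (∑ i, (w i).length) = n} : ℝ))
      atTop (nhds 0) := by
  classical
  have hAne : Nonempty A := Fintype.card_pos_iff.mp (by omega)
  have hNn0 : 0 < 2 * k := by omega
  set Q := Fintype.card A with hQdef
  set C1n : ℕ := 4 * (2 * k * (2 * k)) * (m + 1) with hC1
  have hsqrt : Tendsto (fun n : ℕ => Nat.sqrt n) atTop atTop := by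
    apply tendsto_atTop_atTop.mpr
    intro b
    refine ⟨b ^ 2, fun n hn => ?_⟩
    have := Nat.sqrt_le_sqrt hn
    rwa [Nat.sqrt_eq'] at this
  have hg1 : Tendsto (fun n : ℕ => (C1n : ℝ) / (Nat.sqrt n : ℝ)) atTop (nhds 0) :=
    (tendsto_const_div_atTop_nhds_zero_nat (C1n : ℝ)).comp hsqrt
  have hcomp : Tendsto (fun n : ℕ => Nat.sqrt n + 1) atTop atTop :=
    tendsto_atTop_mono (fun n => Nat.le_succ _) hsqrt
  have hg2 : Tendsto (fun n : ℕ => ((2 * k * (2 * k) : ℕ) : ℝ)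
      * (((Nat.sqrt n + 1 : ℕ) : ℝ) ^ 4 / 2 ^ (Nat.sqrt n + 1))) atTop (nhds 0) := by
    have h4 := (tendsto_pow_const_div_const_pow_of_one_lt 4 (r := 2) one_lt_two).const_mul
      ((2 * k * (2 * k) : ℕ) : ℝ)
    rw [mul_zero] at h4
    exact h4.comp hcomp
  apply squeeze_zero' (g := fun n => (C1n : ℝ) / (Nat.sqrt n : ℝ)
      + ((2 * k * (2 * k) : ℕ) : ℝ)
        * (((Nat.sqrt n + 1 : ℕ) : ℝ) ^ 4 / 2 ^ (Nat.sqrt n + 1)))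
  · exact Eventually.of_forall (fun n => by positivity)
  · filter_upwards [hsqrt.eventually_ge_atTop (4 * m)] with n hs
    set s := Nat.sqrt n with hsdef
    set L := s + 1 with hLdef
    set B := m * L with hBdef
    have hm1 : 1 ≤ m := hm
    have hs4 : 4 ≤ s := le_trans (by omega) hs
    have hssn : s * s ≤ n := Nat.sqrt_le n
    have hnlt : n < L * L := Nat.lt_succ_sqrt n
    have hL1 : 0 < L := Nat.succ_pos s
    clear_value s L B
    have h2B : 2 * B ≤ s * s := by
      rw [hBdef, hLdef]
      have e1 : 2 * (m * (s + 1)) ≤ 4 * m * s := by nlinarith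
      exact le_trans e1 (Nat.mul_le_mul_right s hs)
    have hBn : 2 * B ≤ n := le_trans h2B hssn
    have hB1 : 1 ≤ B := by rw [hBdef]; exact Nat.mul_pos hm hL1
    have hBltn : B < n := by omega
    have hnB2 : n ≤ 2 * (n - B) := by omega
    have hd1 : (0 : ℝ) < ((n - B : ℕ) : ℝ) := by
      have : 0 < n - B := by omega
      exact_mod_cast this
    have hQ0 : (0 : ℝ) < (Q : ℝ) := by
      have : 0 < Q := by omega
      exact_mod_cast this
    have hd2 : (0 : ℝ) < (Q : ℝ) ^ L := pow_pos hQ0 L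
    have hspos : (0 : ℝ) < (s : ℝ) := by
      have : 0 < s := by omega
      exact_mod_cast this
    -- counting facts
    have hsplit := bad_split (A := A) (2 * k) n L m
    rw [← hBdef] at hsplit
    have h1 := bad1_card (A := A) (2 * k) n B
    have h2 := bad2_card (A := A) (2 * k) n L
    have hT := pres_nonempty (A := A) hNn0 n
    have hTpos : (0 : ℝ) < (Nat.card {w : Fin (2 * k) → List A //
        (∑ i, (w i).length) = n} : ℝ) := by exact_mod_cast hT
    have key1 : (Nat.card {w : Fin (2 * k) → List A //
          (∑ i, (w i).length) = n ∧ ∃ i, (w i).length ≤ B} : ℝ)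
        / (Nat.card {w : Fin (2 * k) → List A // (∑ i, (w i).length) = n} : ℝ)
        ≤ ((2 * k * (2 * k) * (B + 1) : ℕ) : ℝ) / ((n - B : ℕ) : ℝ) := by
      rw [div_le_div_iff₀ hTpos hd1]
      have := h1
      calc (Nat.card {w : Fin (2 * k) → List A //
              (∑ i, (w i).length) = n ∧ ∃ i, (w i).length ≤ B} : ℝ) * ((n - B : ℕ) : ℝ)
          = ((Nat.card {w : Fin (2 * k) → List A //
              (∑ i, (w i).length) = n ∧ ∃ i, (w i).length ≤ B} * (n - B) : ℕ) : ℝ) := by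
            push_cast; ring
        _ ≤ ((Nat.card {w : Fin (2 * k) → List A // (∑ i, (w i).length) = n}
              * (2 * k * (2 * k) * (B + 1)) : ℕ) : ℝ) := by exact_mod_cast h1
        _ = ((2 * k * (2 * k) * (B + 1) : ℕ) : ℝ)
              * (Nat.card {w : Fin (2 * k) → List A // (∑ i, (w i).length) = n} : ℝ) := by
            push_cast; ring
    have key2 : (Nat.card {w : Fin (2 * k) → List A //
          (∑ i, (w i).length) = n ∧ ∃ p, MatchP w L p} : ℝ)
        / (Nat.card {w : Fin (2 * k) → List A // (∑ i, (w i).length) = n} : ℝ)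
        ≤ ((2 * k * (2 * k) * ((n + 1) * (n + 1)) : ℕ) : ℝ) / ((Q : ℝ) ^ L) := by
      rw [div_le_div_iff₀ hTpos hd2]
      calc (Nat.card {w : Fin (2 * k) → List A //
              (∑ i, (w i).length) = n ∧ ∃ p, MatchP w L p} : ℝ) * (Q : ℝ) ^ L
          = ((Nat.card {w : Fin (2 * k) → List A //
              (∑ i, (w i).length) = n ∧ ∃ p, MatchP w L p} * Q ^ L : ℕ) : ℝ) := by
            push_cast; ring
        _ ≤ ((Nat.card {w : Fin (2 * k) → List A // (∑ i, (w i).length) = n}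
              * (2 * k * (2 * k) * ((n + 1) * (n + 1))) : ℕ) : ℝ) := by exact_mod_cast h2
        _ = ((2 * k * (2 * k) * ((n + 1) * (n + 1)) : ℕ) : ℝ)
              * (Nat.card {w : Fin (2 * k) → List A // (∑ i, (w i).length) = n} : ℝ) := by
            push_cast; ring
    have key3 : ((2 * k * (2 * k) * (B + 1) : ℕ) : ℝ) / ((n - B : ℕ) : ℝ)
        ≤ (C1n : ℝ) / (s : ℝ) := by
      rw [div_le_div_iff₀ hd1 hspos]
      have f1 : B + 1 ≤ 2 * (m + 1) * s := by
        rw [hBdef, hLdef]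
        nlinarith
      have f2 : s * s ≤ 2 * (n - B) := le_trans hssn hnB2
      have fnat : 2 * k * (2 * k) * (B + 1) * s ≤ C1n * (n - B) := by
        calc 2 * k * (2 * k) * (B + 1) * s ≤ 2 * k * (2 * k) * (2 * (m + 1) * s) * s := by
              exact Nat.mul_le_mul_right s (Nat.mul_le_mul_left _ f1)
          _ = (2 * k * (2 * k)) * (m + 1) * (s * s) * 2 := by ring
          _ ≤ (2 * k * (2 * k)) * (m + 1) * (2 * (n - B)) * 2 := by
              exact Nat.mul_le_mul_right 2 (Nat.mul_le_mul_left _ f2)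
          _ = C1n * (n - B) := by rw [hC1]; ring
      calc ((2 * k * (2 * k) * (B + 1) : ℕ) : ℝ) * (s : ℝ)
          = ((2 * k * (2 * k) * (B + 1) * s : ℕ) : ℝ) := by push_cast; ring
        _ ≤ ((C1n * (n - B) : ℕ) : ℝ) := by exact_mod_cast fnat
        _ = (C1n : ℝ) * ((n - B : ℕ) : ℝ) := by push_cast; ring
    have key4 : ((2 * k * (2 * k) * ((n + 1) * (n + 1)) : ℕ) : ℝ) / ((Q : ℝ) ^ L)
        ≤ ((2 * k * (2 * k) : ℕ) : ℝ) * (((L : ℕ) : ℝ) ^ 4 / 2 ^ L) := by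
      rw [← mul_div_assoc]
      apply div_le_div₀ (by positivity) ?_ (by positivity) ?_
      · have fn : (n + 1) * (n + 1) ≤ L ^ 4 := by
          have h1' : n + 1 ≤ L * L := hnlt
          calc (n + 1) * (n + 1) ≤ (L * L) * (L * L) := Nat.mul_le_mul h1' h1'
            _ = L ^ 4 := by ring
        calc ((2 * k * (2 * k) * ((n + 1) * (n + 1)) : ℕ) : ℝ)
            ≤ ((2 * k * (2 * k) * L ^ 4 : ℕ) : ℝ) := by
              exact_mod_cast Nat.mul_le_mul_left _ fn
          _ = ((2 * k * (2 * k) : ℕ) : ℝ) * ((L : ℕ) : ℝ) ^ 4 := by push_cast; ring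
      · apply pow_le_pow_left₀ (by norm_num)
        exact_mod_cast hA
    -- assemble
    calc (Nat.card {w : Fin (2 * k) → List A //
            (∑ i, (w i).length) = n ∧ FailsC m w} : ℝ)
          / (Nat.card {w : Fin (2 * k) → List A // (∑ i, (w i).length) = n} : ℝ)
        ≤ ((Nat.card {w : Fin (2 * k) → List A //
              (∑ i, (w i).length) = n ∧ ∃ i, (w i).length ≤ B} : ℝ)
            + (Nat.card {w : Fin (2 * k) → List A //
              (∑ i, (w i).length) = n ∧ ∃ p, MatchP w L p} : ℝ))
          / (Nat.card {w : Fin (2 * k) → List A // (∑ i, (w i).length) = n} : ℝ) := by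
          exact (div_le_div_iff_of_pos_right hTpos).mpr (by exact_mod_cast hsplit)
      _ = (Nat.card {w : Fin (2 * k) → List A //
              (∑ i, (w i).length) = n ∧ ∃ i, (w i).length ≤ B} : ℝ)
            / (Nat.card {w : Fin (2 * k) → List A // (∑ i, (w i).length) = n} : ℝ)
          + (Nat.card {w : Fin (2 * k) → List A //
              (∑ i, (w i).length) = n ∧ ∃ p, MatchP w L p} : ℝ)
            / (Nat.card {w : Fin (2 * k) → List A // (∑ i, (w i).length) = n} : ℝ) := by
          rw [add_div]
      _ ≤ (C1n : ℝ) / (s : ℝ) + ((2 * k * (2 * k) : ℕ) : ℝ)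
            * (((L : ℕ) : ℝ) ^ 4 / 2 ^ L) := by
          apply add_le_add (key1.trans key3)
          exact key2.trans key4
  · simpa using hg1.add hg2
end

section
/- Let X, Y be stratified sets, X' ⊆ X and Y' ⊆ Y generic subsets, and f : X' → Y' a surjective, stratification-preserving map whose fibre sizes at points within each stratum Y' ∩ Y_n all lie between k_n and d·k_n for some d ∈ ℕ and integers k_n. If P ⊆ X is generic in X, then f(P ∩ X') is generic in Y. Conversely, if f respects P (meaning f(P ∩ X') and f((X\P) ∩ X') are disjoint) and f(P ∩ X') is generic in Y, then P is generic in X. -/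
open Filter

private lemma ncard_inter_eq' {γ : Type*} (T : Set γ) (S : Finset γ) [DecidablePred (· ∈ T)] :
    (T ∩ (S : Set γ)).ncard = (S.filter (· ∈ T)).card := by
  rw [← Set.ncard_coe_finset]
  congr 1
  ext x
  simp [and_comm]

private lemma fibre_lower' {γ δ : Type*} [DecidableEq γ] [DecidableEq δ]
    (s : Finset γ) (t : Finset δ) (g : γ → δ) (k : ℕ)
    (h : ∀ b ∈ t, k ≤ (s.filter (fun a => g a = b)).card) :
    k * t.card ≤ s.card := by
  calc k * t.card = ∑ _b ∈ t, k := by simp [mul_comm]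
    _ ≤ ∑ b ∈ t, (s.filter (fun a => g a = b)).card := Finset.sum_le_sum h
    _ = (t.biUnion (fun b => s.filter (fun a => g a = b))).card := by
        rw [Finset.card_biUnion]
        intro b _ c _ hbc
        simp only [Finset.disjoint_left, Finset.mem_filter]
        rintro a ⟨_, h1⟩ ⟨_, h2⟩
        exact hbc (h1.symm.trans h2)
    _ ≤ s.card := Finset.card_le_card
        (Finset.biUnion_subset.2 fun b _ => Finset.filter_subset _ _)

private lemma tendsto_one_iff_compl' {γ : Type*} (S : ℕ → Finset γ)
    (hne : ∀ n, (S n).Nonempty) (T : Set γ) :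
    Tendsto (fun n => ((T ∩ (S n : Set γ)).ncard : ℝ) / (S n).card) atTop (nhds 1) ↔
    Tendsto (fun n => ((Tᶜ ∩ (S n : Set γ)).ncard : ℝ) / (S n).card) atTop (nhds 0) := by
  classical
  have key : ∀ n, ((Tᶜ ∩ (S n : Set γ)).ncard : ℝ) / (S n).card
      = 1 - ((T ∩ (S n : Set γ)).ncard : ℝ) / (S n).card := by
    intro n
    have hc : (0:ℝ) < (S n).card := by exact_mod_cast (hne n).card_pos
    have hsum : (T ∩ (S n : Set γ)).ncard + (Tᶜ ∩ (S n : Set γ)).ncard = (S n).card := by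
      rw [ncard_inter_eq' T (S n), ncard_inter_eq' Tᶜ (S n)]
      have := Finset.card_filter_add_card_filter_not (s := S n) (p := (· ∈ T))
      simpa using this
    field_simp
    have : ((T ∩ (S n : Set γ)).ncard : ℝ) + ((Tᶜ ∩ (S n : Set γ)).ncard : ℝ)
        = ((S n).card : ℝ) := by exact_mod_cast congrArg (Nat.cast (R := ℝ)) hsum
    linarith
  constructor
  · intro h
    simp only [key]
    have h2 := tendsto_const_nhds (x := (1:ℝ)) (f := atTop (α := ℕ)) |>.sub h
    simpa using h2
  · intro h
    have h2 := tendsto_const_nhds (x := (1:ℝ)) (f := atTop (α := ℕ)) |>.sub h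
    simp only [key, sub_sub_cancel, sub_zero] at h2
    exact h2

/-- Let `X'`, `Y'` be generic subsets of stratified sets and `f` a surjective
stratification-preserving map `X' → Y'` with fibre sizes within each stratum lying
between `kₙ` and `d·kₙ`. If `P` is generic in `X` then `f(P ∩ X')` is generic in `Y`;
conversely, if `f` respects `P` and `f(P ∩ X')` is generic in `Y` then `P` is
generic in `X`. -/
theorem generic_transfer {α β : Type*}
    (SX : ℕ → Finset α) (SY : ℕ → Finset β)
    (hneX : ∀ n, (SX n).Nonempty) (hneY : ∀ n, (SY n).Nonempty)
    (hcovX : (⋃ n, (SX n : Set α)) = Set.univ)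
    (hcovY : (⋃ n, (SY n : Set β)) = Set.univ)
    (X' : Set α) (Y' : Set β)
    (hX' : Tendsto (fun n => ((X' ∩ (SX n : Set α)).ncard : ℝ) / (SX n).card)
      atTop (nhds 1))
    (hY' : Tendsto (fun n => ((Y' ∩ (SY n : Set β)).ncard : ℝ) / (SY n).card)
      atTop (nhds 1))
    (d : ℕ) (f : α → β)
    (hmaps : ∀ x ∈ X', f x ∈ Y')
    (hsurj : ∀ y ∈ Y', ∃ x ∈ X', f x = y)
    (hstrat : ∀ x ∈ X', ∀ n, x ∈ SX n ↔ f x ∈ SY n)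
    (hfib : ∀ n : ℕ, ∃ kn : ℕ, ∀ y ∈ Y' ∩ (SY n : Set β),
      kn ≤ {x | x ∈ X' ∧ f x = y}.ncard ∧ {x | x ∈ X' ∧ f x = y}.ncard ≤ d * kn)
    (P : Set α) :
    (Tendsto (fun n => ((P ∩ (SX n : Set α)).ncard : ℝ) / (SX n).card) atTop (nhds 1) →
      Tendsto (fun n => (((f '' (P ∩ X')) ∩ (SY n : Set β)).ncard : ℝ) / (SY n).card)
        atTop (nhds 1)) ∧
    (Disjoint (f '' (P ∩ X')) (f '' (Pᶜ ∩ X')) →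
      Tendsto (fun n => (((f '' (P ∩ X')) ∩ (SY n : Set β)).ncard : ℝ) / (SY n).card)
        atTop (nhds 1) →
      Tendsto (fun n => ((P ∩ (SX n : Set α)).ncard : ℝ) / (SX n).card) atTop (nhds 1)) := by
  classical
  set Q : Set β := f '' (P ∩ X') with hQdef
  set k : ℕ → ℕ := fun n => (hfib n).choose with hkdef
  have hk : ∀ n, ∀ y ∈ Y' ∩ (SY n : Set β),
      k n ≤ {x | x ∈ X' ∧ f x = y}.ncard ∧ {x | x ∈ X' ∧ f x = y}.ncard ≤ d * k n :=
    fun n => (hfib n).choose_spec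
  have ha : ∀ n, (0:ℝ) < (SX n).card := fun n => by exact_mod_cast (hneX n).card_pos
  have hb : ∀ n, (0:ℝ) < (SY n).card := fun n => by exact_mod_cast (hneY n).card_pos
  -- eventual half bounds
  have hYhalf : ∀ᶠ n in atTop,
      ((SY n).card : ℝ) ≤ 2 * ((Y' ∩ (SY n : Set β)).ncard : ℝ) := by
    filter_upwards [hY'.eventually (eventually_gt_nhds (show (1/2:ℝ) < 1 by norm_num))]
      with n hn
    have := (lt_div_iff₀ (hb n)).1 hn
    linarith
  have hXhalf : ∀ᶠ n in atTop,
      ((SX n).card : ℝ) ≤ 2 * ((X' ∩ (SX n : Set α)).ncard : ℝ) := by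
    filter_upwards [hX'.eventually (eventually_gt_nhds (show (1/2:ℝ) < 1 by norm_num))]
      with n hn
    have := (lt_div_iff₀ (ha n)).1 hn
    linarith
  have hk1 : ∀ᶠ n in atTop, 1 ≤ k n := by
    filter_upwards [hYhalf] with n hn
    obtain ⟨y, hy⟩ : (Y' ∩ (SY n : Set β)).Nonempty := by
      rw [Set.nonempty_iff_ne_empty]
      intro h
      rw [h] at hn
      simp only [Set.ncard_empty, Nat.cast_zero, mul_zero] at hn
      exact absurd hn (not_le.2 (hb n))
    obtain ⟨x, hx, hfx⟩ := hsurj y hy.1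
    have hfin : {x | x ∈ X' ∧ f x = y}.Finite := by
      apply Set.Finite.subset (SX n).finite_toSet
      intro z hz
      exact (hstrat z hz.1 n).2 (by rw [hz.2]; exact hy.2)
    have h1 : 0 < {x | x ∈ X' ∧ f x = y}.ncard :=
      (Set.ncard_pos hfin).2 ⟨x, hx, hfx⟩
    have h2 := (hk n y hy).2
    rcases Nat.eq_zero_or_pos (k n) with h | h
    · rw [h, mul_zero] at h2; omega
    · exact h
  -- fibre set as a finset card
  have hfibeq : ∀ n, ∀ y ∈ Y' ∩ (SY n : Set β),
      ((SX n).filter (fun x => x ∈ X' ∧ f x = y)).card = {x | x ∈ X' ∧ f x = y}.ncard := by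
    intro n y hy
    rw [← Set.ncard_coe_finset]
    congr 1
    ext x
    simp only [Finset.coe_filter, Set.mem_setOf_eq]
    constructor
    · rintro ⟨-, h⟩; exact h
    · rintro ⟨hx, hfx⟩
      exact ⟨(hstrat x hx n).2 (by rw [hfx]; exact hy.2), hx, hfx⟩
  -- counting facts
  have C1 : ∀ n, k n * ((SY n).filter (· ∈ Y')).card ≤ ((SX n).filter (· ∈ X')).card := by
    intro n
    apply Finset.mul_card_image_le_card_of_maps_to (f := f)
    · intro x hx
      rw [Finset.mem_filter] at hx ⊢
      exact ⟨(hstrat x hx.2 n).1 hx.1, hmaps x hx.2⟩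
    · intro y hy
      rw [Finset.mem_filter] at hy
      have hy' : y ∈ Y' ∩ (SY n : Set β) := ⟨hy.2, hy.1⟩
      calc k n ≤ {x | x ∈ X' ∧ f x = y}.ncard := (hk n y hy').1
        _ = ((SX n).filter (fun x => x ∈ X' ∧ f x = y)).card := (hfibeq n y hy').symm
        _ ≤ _ := by
            apply Finset.card_le_card
            intro x hx
            simp only [Finset.mem_filter] at hx ⊢
            exact ⟨⟨hx.1, hx.2.1⟩, hx.2.2⟩
  have C2 : ∀ n, ((SX n).filter (· ∈ X')).card ≤ d * k n * ((SY n).filter (· ∈ Y')).card := by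
    intro n
    apply Finset.card_le_mul_card_image_of_maps_to (f := f)
    · intro x hx
      rw [Finset.mem_filter] at hx ⊢
      exact ⟨(hstrat x hx.2 n).1 hx.1, hmaps x hx.2⟩
    · intro y hy
      rw [Finset.mem_filter] at hy
      have hy' : y ∈ Y' ∩ (SY n : Set β) := ⟨hy.2, hy.1⟩
      calc (((SX n).filter (· ∈ X')).filter (fun x => f x = y)).card
          ≤ ((SX n).filter (fun x => x ∈ X' ∧ f x = y)).card := by
            apply Finset.card_le_card
            intro x hx
            rw [Finset.filter_filter, Finset.mem_filter] at hx
            rw [Finset.mem_filter]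
            exact hx
        _ = {x | x ∈ X' ∧ f x = y}.ncard := hfibeq n y hy'
        _ ≤ d * k n := (hk n y hy').2
  constructor
  · -- forward direction
    intro hP
    rw [tendsto_one_iff_compl' SX hneX] at hP
    rw [tendsto_one_iff_compl' SY hneY] at hY'
    rw [tendsto_one_iff_compl' SY hneY]
    apply squeeze_zero' (g := fun n => ((Y'ᶜ ∩ (SY n : Set β)).ncard : ℝ) / (SY n).card
      + 2 * d * (((Pᶜ ∩ (SX n : Set α)).ncard : ℝ) / (SX n).card))
    · exact Eventually.of_forall fun n => by positivity
    · filter_upwards [hk1, hXhalf] with n hk1n hXn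
      -- notation
      set A := SX n
      set B := SY n
      have C3 : k n * (B.filter (fun y => y ∈ Y' ∧ y ∉ Q)).card
          ≤ (A.filter (· ∈ Pᶜ)).card := by
        apply fibre_lower' _ _ f
        intro y hy
        rw [Finset.mem_filter] at hy
        have hy' : y ∈ Y' ∩ (SY n : Set β) := ⟨hy.2.1, hy.1⟩
        calc k n ≤ {x | x ∈ X' ∧ f x = y}.ncard := (hk n y hy').1
          _ = (A.filter (fun x => x ∈ X' ∧ f x = y)).card := (hfibeq n y hy').symm
          _ ≤ _ := by
              apply Finset.card_le_card
              intro x hx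
              simp only [Finset.mem_filter] at hx ⊢
              refine ⟨⟨hx.1, ?_⟩, hx.2.2⟩
              intro hxP
              exact hy.2.2 ⟨x, ⟨hxP, hx.2.1⟩, hx.2.2⟩
      have hsplit : (B.filter (· ∈ Qᶜ)).card ≤ (B.filter (· ∈ Y'ᶜ)).card
          + (B.filter (fun y => y ∈ Y' ∧ y ∉ Q)).card := by
        rw [← Finset.card_union_of_disjoint ?hd]
        case hd =>
          rw [Finset.disjoint_left]
          intro y hy1 hy2
          rw [Finset.mem_filter] at hy1 hy2
          exact hy1.2 hy2.2.1
        apply Finset.card_le_card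
        intro y hy
        rw [Finset.mem_filter] at hy
        rw [Finset.mem_union, Finset.mem_filter, Finset.mem_filter]
        by_cases hyY : y ∈ Y'
        · exact Or.inr ⟨hy.1, hyY, hy.2⟩
        · exact Or.inl ⟨hy.1, hyY⟩
      -- real versions
      have haR := ha n
      have hbR := hb n
      have hkR : (1:ℝ) ≤ (k n : ℝ) := by exact_mod_cast hk1n
      set tR : ℝ := ((B.filter (fun y => y ∈ Y' ∧ y ∉ Q)).card : ℝ) with htR
      have htnn : (0:ℝ) ≤ tR := by positivity
      have hqC : ((Qᶜ ∩ (B : Set β)).ncard : ℝ) = ((B.filter (· ∈ Qᶜ)).card : ℝ) := by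
        exact_mod_cast ncard_inter_eq' Qᶜ B
      have hyC : ((Y'ᶜ ∩ (B : Set β)).ncard : ℝ) = ((B.filter (· ∈ Y'ᶜ)).card : ℝ) := by
        exact_mod_cast ncard_inter_eq' Y'ᶜ B
      have hpC : ((Pᶜ ∩ (A : Set α)).ncard : ℝ) = ((A.filter (· ∈ Pᶜ)).card : ℝ) := by
        exact_mod_cast ncard_inter_eq' Pᶜ A
      have hxX : ((X' ∩ (A : Set α)).ncard : ℝ) = ((A.filter (· ∈ X')).card : ℝ) := by
        exact_mod_cast ncard_inter_eq' X' A
      have hC3R : (k n : ℝ) * tR ≤ ((Pᶜ ∩ (A : Set α)).ncard : ℝ) := by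
        rw [hpC, htR]
        exact_mod_cast C3
      have hC2R : ((X' ∩ (A : Set α)).ncard : ℝ) ≤ (d : ℝ) * (k n : ℝ) * (B.card : ℝ) := by
        rw [hxX]
        have h1 := C2 n
        have h2 : ((SY n).filter (· ∈ Y')).card ≤ B.card := Finset.card_filter_le _ _
        have : ((SX n).filter (· ∈ X')).card ≤ d * k n * B.card :=
          h1.trans (Nat.mul_le_mul_left _ h2)
        exact_mod_cast this
      have key : tR / (B.card : ℝ) ≤ 2 * d * (((Pᶜ ∩ (A : Set α)).ncard : ℝ) / (A.card : ℝ)) := by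
        rw [mul_div_assoc' (2 * (d:ℝ)), div_le_div_iff₀ hbR haR]
        calc tR * (A.card : ℝ) ≤ tR * (2 * ((X' ∩ (A : Set α)).ncard : ℝ)) :=
              mul_le_mul_of_nonneg_left hXn htnn
          _ ≤ tR * (2 * ((d : ℝ) * (k n : ℝ) * (B.card : ℝ))) := by
              apply mul_le_mul_of_nonneg_left _ htnn
              linarith
          _ = 2 * (d:ℝ) * (B.card : ℝ) * ((k n : ℝ) * tR) := by ring
          _ ≤ 2 * (d:ℝ) * (B.card : ℝ) * ((Pᶜ ∩ (A : Set α)).ncard : ℝ) := by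
              apply mul_le_mul_of_nonneg_left hC3R
              positivity
          _ = 2 * (d:ℝ) * ((Pᶜ ∩ (A : Set α)).ncard : ℝ) * (B.card : ℝ) := by ring
      have hsplitR : ((Qᶜ ∩ (B : Set β)).ncard : ℝ) / (B.card : ℝ)
          ≤ ((Y'ᶜ ∩ (B : Set β)).ncard : ℝ) / (B.card : ℝ) + tR / (B.card : ℝ) := by
        rw [hqC, hyC, htR, ← add_div]
        gcongr
        exact_mod_cast hsplit
      calc ((Qᶜ ∩ (B : Set β)).ncard : ℝ) / (B.card : ℝ)
          ≤ ((Y'ᶜ ∩ (B : Set β)).ncard : ℝ) / (B.card : ℝ) + tR / (B.card : ℝ) := hsplitR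
        _ ≤ _ := by linarith [key]
    · have := hY'.add (hP.const_mul (2 * (d:ℝ)))
      simpa using this
  · -- backward direction
    intro hdisj hQgen
    rw [tendsto_one_iff_compl' SY hneY] at hQgen
    rw [tendsto_one_iff_compl' SX hneX] at hX'
    rw [tendsto_one_iff_compl' SX hneX]
    apply squeeze_zero' (g := fun n => ((X'ᶜ ∩ (SX n : Set α)).ncard : ℝ) / (SX n).card
      + 2 * d * (((Qᶜ ∩ (SY n : Set β)).ncard : ℝ) / (SY n).card))
    · exact Eventually.of_forall fun n => by positivity
    · filter_upwards [hk1, hYhalf] with n hk1n hYn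
      set A := SX n
      set B := SY n
      have C4 : (A.filter (fun x => x ∈ X' ∧ x ∉ P)).card
          ≤ d * k n * (B.filter (fun y => y ∈ Y' ∧ y ∉ Q)).card := by
        apply Finset.card_le_mul_card_image_of_maps_to (f := f)
        · intro x hx
          rw [Finset.mem_filter] at hx ⊢
          refine ⟨(hstrat x hx.2.1 n).1 hx.1, hmaps x hx.2.1, ?_⟩
          intro hfxQ
          exact Set.disjoint_left.1 hdisj hfxQ ⟨x, ⟨hx.2.2, hx.2.1⟩, rfl⟩
        · intro y hy
          rw [Finset.mem_filter] at hy
          have hy' : y ∈ Y' ∩ (SY n : Set β) := ⟨hy.2.1, hy.1⟩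
          calc ((A.filter (fun x => x ∈ X' ∧ x ∉ P)).filter (fun x => f x = y)).card
              ≤ (A.filter (fun x => x ∈ X' ∧ f x = y)).card := by
                apply Finset.card_le_card
                intro x hx
                rw [Finset.filter_filter, Finset.mem_filter] at hx
                rw [Finset.mem_filter]
                exact ⟨hx.1, hx.2.1.1, hx.2.2⟩
            _ = {x | x ∈ X' ∧ f x = y}.ncard := hfibeq n y hy'
            _ ≤ d * k n := (hk n y hy').2
      have hT : (B.filter (fun y => y ∈ Y' ∧ y ∉ Q)).card ≤ (B.filter (· ∈ Qᶜ)).card := by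
        apply Finset.card_le_card
        intro y hy
        rw [Finset.mem_filter] at hy ⊢
        exact ⟨hy.1, hy.2.2⟩
      have hsplit : (A.filter (· ∈ Pᶜ)).card ≤ (A.filter (· ∈ X'ᶜ)).card
          + (A.filter (fun x => x ∈ X' ∧ x ∉ P)).card := by
        rw [← Finset.card_union_of_disjoint ?hd]
        case hd =>
          rw [Finset.disjoint_left]
          intro x hx1 hx2
          rw [Finset.mem_filter] at hx1 hx2
          exact hx1.2 hx2.2.1
        apply Finset.card_le_card
        intro x hx
        rw [Finset.mem_filter] at hx
        rw [Finset.mem_union, Finset.mem_filter, Finset.mem_filter]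
        by_cases hxX : x ∈ X'
        · exact Or.inr ⟨hx.1, hxX, hx.2⟩
        · exact Or.inl ⟨hx.1, hxX⟩
      have haR := ha n
      have hbR := hb n
      set sR : ℝ := ((A.filter (fun x => x ∈ X' ∧ x ∉ P)).card : ℝ) with hsR
      have hsnn : (0:ℝ) ≤ sR := by positivity
      have hqC : ((Qᶜ ∩ (B : Set β)).ncard : ℝ) = ((B.filter (· ∈ Qᶜ)).card : ℝ) := by
        exact_mod_cast ncard_inter_eq' Qᶜ B
      have hxC : ((X'ᶜ ∩ (A : Set α)).ncard : ℝ) = ((A.filter (· ∈ X'ᶜ)).card : ℝ) := by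
        exact_mod_cast ncard_inter_eq' X'ᶜ A
      have hpC : ((Pᶜ ∩ (A : Set α)).ncard : ℝ) = ((A.filter (· ∈ Pᶜ)).card : ℝ) := by
        exact_mod_cast ncard_inter_eq' Pᶜ A
      have hyY : ((Y' ∩ (B : Set β)).ncard : ℝ) = ((B.filter (· ∈ Y')).card : ℝ) := by
        exact_mod_cast ncard_inter_eq' Y' B
      -- k n * B.card ≤ 2 * A.card
      have hkb : (k n : ℝ) * (B.card : ℝ) ≤ 2 * (A.card : ℝ) := by
        have h1 : (k n : ℝ) * ((B.filter (· ∈ Y')).card : ℝ) ≤ ((A.filter (· ∈ X')).card : ℝ) := by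
          exact_mod_cast C1 n
        have h2 : ((A.filter (· ∈ X')).card : ℝ) ≤ (A.card : ℝ) := by
          exact_mod_cast Finset.card_filter_le A (· ∈ X')
        have h3 : ((SY n).card : ℝ) ≤ 2 * ((Y' ∩ (SY n : Set β)).ncard : ℝ) := hYn
        rw [hyY] at h3
        have hknn : (0:ℝ) ≤ (k n : ℝ) := by positivity
        calc (k n : ℝ) * (B.card : ℝ) ≤ (k n : ℝ) * (2 * ((B.filter (· ∈ Y')).card : ℝ)) :=
              mul_le_mul_of_nonneg_left h3 hknn
          _ = 2 * ((k n : ℝ) * ((B.filter (· ∈ Y')).card : ℝ)) := by ring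
          _ ≤ 2 * ((A.filter (· ∈ X')).card : ℝ) := by linarith
          _ ≤ 2 * (A.card : ℝ) := by linarith
      have key : sR / (A.card : ℝ) ≤ 2 * d * (((Qᶜ ∩ (B : Set β)).ncard : ℝ) / (B.card : ℝ)) := by
        rw [mul_div_assoc' (2 * (d:ℝ)), div_le_div_iff₀ haR hbR]
        have hC4R : sR ≤ (d : ℝ) * (k n : ℝ) * ((Qᶜ ∩ (B : Set β)).ncard : ℝ) := by
          rw [hqC, hsR]
          have h5 : (A.filter (fun x => x ∈ X' ∧ x ∉ P)).card ≤ d * k n * (B.filter (· ∈ Qᶜ)).card :=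
            C4.trans (Nat.mul_le_mul_left _ hT)
          exact_mod_cast h5
        have hqnn : (0:ℝ) ≤ ((Qᶜ ∩ (B : Set β)).ncard : ℝ) := by positivity
        calc sR * (B.card : ℝ) ≤ (d : ℝ) * (k n : ℝ) * ((Qᶜ ∩ (B : Set β)).ncard : ℝ) * (B.card : ℝ) :=
              mul_le_mul_of_nonneg_right hC4R (by positivity)
          _ = (d : ℝ) * ((Qᶜ ∩ (B : Set β)).ncard : ℝ) * ((k n : ℝ) * (B.card : ℝ)) := by ring
          _ ≤ (d : ℝ) * ((Qᶜ ∩ (B : Set β)).ncard : ℝ) * (2 * (A.card : ℝ)) := by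
              apply mul_le_mul_of_nonneg_left hkb
              positivity
          _ = 2 * (d:ℝ) * ((Qᶜ ∩ (B : Set β)).ncard : ℝ) * (A.card : ℝ) := by ring
      have hsplitR : ((Pᶜ ∩ (A : Set α)).ncard : ℝ) / (A.card : ℝ)
          ≤ ((X'ᶜ ∩ (A : Set α)).ncard : ℝ) / (A.card : ℝ) + sR / (A.card : ℝ) := by
        rw [hpC, hxC, hsR, ← add_div]
        gcongr
        exact_mod_cast hsplit
      calc ((Pᶜ ∩ (A : Set α)).ncard : ℝ) / (A.card : ℝ)
          ≤ ((X'ᶜ ∩ (A : Set α)).ncard : ℝ) / (A.card : ℝ) + sR / (A.card : ℝ) := hsplitR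
        _ ≤ _ := by linarith [key]
    · have := hX'.add (hQgen.const_mul (2 * (d:ℝ)))
      simpa using this
end

section
/- Let M be a monoid with the property that for every element m ∈ M, only finitely many words over a generating alphabet A represent m (i.e. each congruence class of the presentation is finite). Then M is J-trivial: if a, b ∈ M generate the same two-sided principal ideal (a = pbq and b = ras for some p,q,r,s ∈ M), then a = b. Moreover M is torsion-free: no non-identity element a satisfies a^i = a^j for distinct positive i, j. -/
private lemma freeMonoid_length_pow {A : Type*} (u : FreeMonoid A) (n : ℕ) :
    (u ^ n).length = n * u.length := by
  induction n with
  | zero => simp [pow_zero]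
  | succ n ih => rw [pow_succ, FreeMonoid.length_mul, ih]; ring

private lemma key_lemma_s19 {A : Type*} {M : Type*} [Monoid M]
    (φ : FreeMonoid A →* M) (hsurj : Function.Surjective φ)
    (hfin : ∀ m : M, (φ ⁻¹' {m}).Finite) :
    ∀ m x y : M, m = x * m * y → x = 1 ∧ y = 1 := by
  intro m x y h
  have hn : ∀ n : ℕ, m = x ^ n * m * y ^ n := by
    intro n
    induction n with
    | zero => simp
    | succ n ih =>
      conv_lhs => rw [h, ih]
      rw [pow_succ' x n, pow_succ y n]
      simp [mul_assoc]
  obtain ⟨u, hu⟩ := hsurj x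
  obtain ⟨w, hw⟩ := hsurj m
  obtain ⟨v, hv⟩ := hsurj y
  have hlen : u.length = 0 ∧ v.length = 0 := by
    by_contra hne
    have hpos : 0 < u.length + v.length := by omega
    have hmem : ∀ n : ℕ, u ^ n * w * v ^ n ∈ φ ⁻¹' {m} := by
      intro n
      simp only [Set.mem_preimage, Set.mem_singleton_iff, map_mul, map_pow, hu, hw, hv]
      exact (hn n).symm
    have hinj : Function.Injective (fun n : ℕ => u ^ n * w * v ^ n) := by
      intro n₁ n₂ hnn
      have := congrArg FreeMonoid.length hnn
      simp only [FreeMonoid.length_mul, freeMonoid_length_pow] at this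
      nlinarith
    exact Set.infinite_of_injective_forall_mem hinj hmem (hfin m)
  constructor
  · rw [← hu, FreeMonoid.length_eq_zero.mp hlen.1, map_one]
  · rw [← hv, FreeMonoid.length_eq_zero.mp hlen.2, map_one]

/-- Let `M` be a monoid generated by an alphabet `A` (via a surjective monoid
homomorphism from the free monoid on `A`) such that every element of `M` is
represented by only finitely many words. Then `M` is `J`-trivial (elements
generating the same two-sided principal ideal are equal) and torsion-free
(no non-identity element satisfies `a^i = a^j` for distinct positive `i`, `j`). -/
theorem Jtrivial_and_torsionFree_of_finite_classes {A : Type*} {M : Type*} [Monoid M]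
    (φ : FreeMonoid A →* M) (hsurj : Function.Surjective φ)
    (hfin : ∀ m : M, (φ ⁻¹' {m}).Finite) :
    (∀ a b p q r s : M, a = p * b * q → b = r * a * s → a = b) ∧
    (∀ a : M, a ≠ 1 → ∀ i j : ℕ, 0 < i → 0 < j → i ≠ j → a ^ i ≠ a ^ j) := by
  have key := key_lemma_s19 φ hsurj hfin
  constructor
  · intro a b p q r s hab hba
    have h1 : a = (p * r) * a * (s * q) := by
      calc a = p * b * q := hab
      _ = p * (r * a * s) * q := by rw [hba]
      _ = (p * r) * a * (s * q) := by simp [mul_assoc]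
    obtain ⟨hpr, hsq⟩ := key a (p * r) (s * q) h1
    obtain ⟨hp, hr⟩ := key 1 p r (by simpa using hpr.symm)
    obtain ⟨hs, hq⟩ := key 1 s q (by simpa using hsq.symm)
    rw [hab, hp, hq, one_mul, mul_one]
  · intro a ha i j hi hj hij heq
    wlog hlt : i < j generalizing i j
    · exact this j i hj hi (Ne.symm hij) heq.symm (by omega)
    have hkey : a ^ i = 1 * a ^ i * a ^ (j - i) := by
      rw [one_mul, ← pow_add]
      rw [show i + (j - i) = j by omega]
      exact heq
    have := (key (a ^ i) 1 (a ^ (j - i)) hkey).2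
    have hk : a ^ (j - i) = a * a ^ (j - i - 1) := by
      rw [← pow_succ']
      congr 1; omega
    have h2 := key 1 a (a ^ (j - i - 1)) (by rw [mul_one, ← hk, this])
    exact ha h2.1
end
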